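/- arXiv:2212.13181 — 6 statements merged into one kernel-verified Lean document; each statement's English description precedes it below -/
import Mathlib

section
/- Let n ≥ 3, let i, j, k be three pairwise distinct indices with 1 ≤ i, j, k ≤ n, and let m and d be arbitrary integers. Then in SL(n,ℤ) the following two identities hold: (1) e_{ji}^m e_{ij}^d e_{ji}^{−m} = (e_{jk}^m e_{kj}^d e_{jk}^{−m}) · e_{ij}^d · (e_{ik}^d)^{−m} · (e_{ik} e_{ki}^d e_{ik}^{−1})^{−m} · (e_{ji}^d)^{−m²} · (e_{jk}^d)^{m²} · (e_{ki}^d)^{m} · (e_{kj}^d)^{−1}; and (2) e_{ji}^m e_{ij}^d e_{ji}^{−m} = e_{ik}^d · (e_{jk}^d)^{m} · (e_{kj} e_{jk}^d e_{kj}^{−1})^{−m} · (e_{ji}^d)^{−m²} · (e_{ki}^d)^{−m²} · (e_{ki}^{−m} e_{ik}^d e_{ki}^{m})^{−1} · e_{ij}^d · (e_{kj}^d)^{−m}. -/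
open Matrix

abbrev SLZ (n : ℕ) := Matrix.SpecialLinearGroup (Fin n) ℤ

/-- The elementary matrix `e_{ij}` whose diagonal entries and `(i,j)` entry are `1`
and whose other entries are `0` (junk value `1` if `i = j`). -/
def E {n : ℕ} (i j : Fin n) : SLZ n :=
  if h : i ≠ j then ⟨Matrix.transvection i j 1, Matrix.det_transvection_of_ne i j h 1⟩ else 1

namespace ConjAux

variable {n : ℕ}

def Tm (a b : Fin n) (h : a ≠ b) (c : ℤ) : SLZ n :=
  ⟨Matrix.transvection a b c, Matrix.det_transvection_of_ne a b h c⟩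

lemma coe_Tm (a b : Fin n) (h : a ≠ b) (c : ℤ) :
    ((Tm a b h c : SLZ n) : Matrix (Fin n) (Fin n) ℤ) = Matrix.transvection a b c := rfl

lemma Tm_mul (a b : Fin n) (h : a ≠ b) (c d : ℤ) :
    Tm a b h c * Tm a b h d = Tm a b h (c + d) := by
  apply Subtype.ext
  simp [coe_Tm, Matrix.SpecialLinearGroup.coe_mul,
    Matrix.transvection_mul_transvection_same _ _ h]

lemma Tm_zero (a b : Fin n) (h : a ≠ b) : Tm a b h 0 = 1 := by
  apply Subtype.ext
  simp [coe_Tm, Matrix.transvection]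

lemma Tm_inv (a b : Fin n) (h : a ≠ b) (c : ℤ) : (Tm a b h c)⁻¹ = Tm a b h (-c) :=
  (eq_inv_of_mul_eq_one_right (by rw [Tm_mul, add_neg_cancel, Tm_zero])).symm

lemma Tm_pow (a b : Fin n) (h : a ≠ b) (c : ℤ) (p : ℕ) :
    (Tm a b h c) ^ p = Tm a b h (p * c) := by
  induction p with
  | zero => simp [Tm_zero]
  | succ p ih => rw [pow_succ, ih, Tm_mul]; congr 1; push_cast; ring

lemma Tm_zpow (a b : Fin n) (h : a ≠ b) (c : ℤ) (p : ℤ) :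
    (Tm a b h c) ^ p = Tm a b h (p * c) := by
  cases p with
  | ofNat q => rw [Int.ofNat_eq_natCast, zpow_natCast, Tm_pow]
  | negSucc q => rw [zpow_negSucc, Tm_pow, Tm_inv]; congr 1; rw [Int.negSucc_eq]; push_cast; ring

lemma E_eq (a b : Fin n) (h : a ≠ b) : E a b = Tm a b h 1 := by
  rw [E]; exact dif_pos h

end ConjAux
namespace ConjAux

lemma tv (a b : Fin 3) (c : ℤ) :
    Matrix.transvection a b c = 1 + Matrix.single a b c := rfl

lemma tv01 (c : ℤ) : Matrix.transvection (0 : Fin 3) 1 c = !![1,c,0;0,1,0;0,0,1] := by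
  ext a b; fin_cases a <;> fin_cases b <;>
    simp [Matrix.transvection, Matrix.single, Matrix.one_apply, Matrix.vecHead, Matrix.vecTail]

lemma tv10 (c : ℤ) : Matrix.transvection (1 : Fin 3) 0 c = !![1,0,0;c,1,0;0,0,1] := by
  ext a b; fin_cases a <;> fin_cases b <;>
    simp [Matrix.transvection, Matrix.single, Matrix.one_apply, Matrix.vecHead, Matrix.vecTail]

lemma tv02 (c : ℤ) : Matrix.transvection (0 : Fin 3) 2 c = !![1,0,c;0,1,0;0,0,1] := by
  ext a b; fin_cases a <;> fin_cases b <;>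
    simp [Matrix.transvection, Matrix.single, Matrix.one_apply, Matrix.vecHead, Matrix.vecTail]

lemma tv20 (c : ℤ) : Matrix.transvection (2 : Fin 3) 0 c = !![1,0,0;0,1,0;c,0,1] := by
  ext a b; fin_cases a <;> fin_cases b <;>
    simp [Matrix.transvection, Matrix.single, Matrix.one_apply, Matrix.vecHead, Matrix.vecTail]

lemma tv12 (c : ℤ) : Matrix.transvection (1 : Fin 3) 2 c = !![1,0,0;0,1,c;0,0,1] := by
  ext a b; fin_cases a <;> fin_cases b <;>
    simp [Matrix.transvection, Matrix.single, Matrix.one_apply, Matrix.vecHead, Matrix.vecTail]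

lemma tv21 (c : ℤ) : Matrix.transvection (2 : Fin 3) 1 c = !![1,0,0;0,1,0;0,c,1] := by
  ext a b; fin_cases a <;> fin_cases b <;>
    simp [Matrix.transvection, Matrix.single, Matrix.one_apply, Matrix.vecHead, Matrix.vecTail]

end ConjAux
namespace ConjAux

lemma h01 : (0:Fin 3) ≠ 1 := by decide
lemma h10 : (1:Fin 3) ≠ 0 := by decide
lemma h02 : (0:Fin 3) ≠ 2 := by decide
lemma h20 : (2:Fin 3) ≠ 0 := by decide
lemma h12 : (1:Fin 3) ≠ 2 := by decide
lemma h21 : (2:Fin 3) ≠ 1 := by decide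

set_option maxHeartbeats 4000000 in
lemma key1 (m d : ℤ) :
    (E (1:Fin 3) 0) ^ m * (E 0 1) ^ d * (E 1 0) ^ (-m) =
      (E 1 2) ^ m * (E 2 1) ^ d * (E 1 2) ^ (-m) *
        ((E 0 1) ^ d) * ((E 0 2) ^ d) ^ (-m) *
        (E 0 2 * (E 2 0) ^ d * (E 0 2)⁻¹) ^ (-m) *
        ((E 1 0) ^ d) ^ (-m ^ 2) * ((E 1 2) ^ d) ^ (m ^ 2) *
        ((E 2 0) ^ d) ^ m * ((E 2 1) ^ d)⁻¹ := by
  simp only [conj_zpow]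
  simp only [E_eq 0 1 h01, E_eq 1 0 h10, E_eq 0 2 h02, E_eq 2 0 h20,
    E_eq 1 2 h12, E_eq 2 1 h21]
  simp only [Tm_zpow, Tm_inv, _root_.mul_inv_rev, Tm_mul]
  apply Subtype.ext
  simp only [Matrix.SpecialLinearGroup.coe_mul, coe_Tm]
  simp only [tv01, tv10, tv02, tv20, tv12, tv21, Matrix.mul_fin_three]
  ext a b
  fin_cases a <;> fin_cases b <;> simp <;> first | ring1 | tauto | (left; ring1)

set_option maxHeartbeats 4000000 in
lemma key2 (m d : ℤ) :
    (E (1:Fin 3) 0) ^ m * (E 0 1) ^ d * (E 1 0) ^ (-m) =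
      (E 0 2) ^ d * ((E 1 2) ^ d) ^ m *
        (E 2 1 * (E 1 2) ^ d * (E 2 1)⁻¹) ^ (-m) *
        ((E 1 0) ^ d) ^ (-m ^ 2) * ((E 2 0) ^ d) ^ (-m ^ 2) *
        ((E 2 0) ^ (-m) * (E 0 2) ^ d * (E 2 0) ^ m)⁻¹ *
        ((E 0 1) ^ d) * ((E 2 1) ^ d) ^ (-m) := by
  simp only [conj_zpow]
  simp only [E_eq 0 1 h01, E_eq 1 0 h10, E_eq 0 2 h02, E_eq 2 0 h20,
    E_eq 1 2 h12, E_eq 2 1 h21]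
  simp only [Tm_zpow, Tm_inv, _root_.mul_inv_rev, Tm_mul]
  apply Subtype.ext
  simp only [Matrix.SpecialLinearGroup.coe_mul, coe_Tm]
  simp only [tv01, tv10, tv02, tv20, tv12, tv21, Matrix.mul_fin_three]
  ext a b
  fin_cases a <;> fin_cases b <;> simp <;> first | ring1 | tauto | (left; ring1)

end ConjAux
namespace ConjAux

noncomputable def eqv {n : ℕ} (g : Fin 3 → Fin n) (hg : Function.Injective g) :
    (Fin 3 ⊕ {x : Fin n // x ∉ Set.range g}) ≃ Fin n :=
  (Equiv.sumCongr (Equiv.ofInjective g hg) (Equiv.refl _)).trans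
    (Equiv.sumCompl (· ∈ Set.range g))

lemma eqv_inl {n : ℕ} (g : Fin 3 → Fin n) (hg : Function.Injective g) (a : Fin 3) :
    eqv g hg (Sum.inl a) = g a := by
  simp [eqv]

lemma eqv_inr {n : ℕ} (g : Fin 3 → Fin n) (hg : Function.Injective g)
    (u : {x : Fin n // x ∉ Set.range g}) : eqv g hg (Sum.inr u) = u := by
  simp [eqv]

noncomputable def φ {n : ℕ} (g : Fin 3 → Fin n) (hg : Function.Injective g) : SLZ 3 →* SLZ n where
  toFun A := ⟨(Matrix.reindexAlgEquiv ℤ ℤ (eqv g hg))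
      (Matrix.fromBlocks (A : Matrix (Fin 3) (Fin 3) ℤ) 0 0 1), by
    simp [Matrix.det_fromBlocks_zero₂₁, A.2]⟩
  map_one' := by
    apply Subtype.ext
    simp [Matrix.fromBlocks_one]
  map_mul' A B := by
    apply Subtype.ext
    show Matrix.reindexAlgEquiv ℤ ℤ (eqv g hg) _ =
      Matrix.reindexAlgEquiv ℤ ℤ (eqv g hg) _ * Matrix.reindexAlgEquiv ℤ ℤ (eqv g hg) _
    rw [← _root_.map_mul]
    congr 1
    simp [Matrix.fromBlocks_multiply]

lemma φ_E {n : ℕ} (g : Fin 3 → Fin n) (hg : Function.Injective g) (a b : Fin 3)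
    (hab : a ≠ b) : φ g hg (E a b) = E (g a) (g b) := by
  apply Subtype.ext
  show Matrix.reindexAlgEquiv ℤ ℤ (eqv g hg) _ = _
  rw [E_eq a b hab, E_eq _ _ (hg.ne hab), coe_Tm, coe_Tm]
  ext x y
  rw [Matrix.reindexAlgEquiv_apply, Matrix.reindex_apply, Matrix.submatrix_apply]
  rcases hx : (eqv g hg).symm x with a' | u <;> rcases hy : (eqv g hg).symm y with b' | v
  · have hxe : x = g a' := by rw [← eqv_inl g hg a', ← hx, Equiv.apply_symm_apply]
    have hye : y = g b' := by rw [← eqv_inl g hg b', ← hy, Equiv.apply_symm_apply]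
    subst hxe hye
    simp [Matrix.transvection, Matrix.single, Matrix.one_apply, hg.eq_iff]
  · have hxe : x = g a' := by rw [← eqv_inl g hg a', ← hx, Equiv.apply_symm_apply]
    have hye : y = (v : Fin n) := by rw [← eqv_inr g hg v, ← hy, Equiv.apply_symm_apply]
    have h1 : g a' ≠ (v : Fin n) := fun h => v.2 ⟨a', h⟩
    have h2 : g b ≠ (v : Fin n) := fun h => v.2 ⟨b, h⟩
    subst hxe hye
    simp [Matrix.transvection, Matrix.single, Matrix.one_apply, h1, h2]
  · have hxe : x = (u : Fin n) := by rw [← eqv_inr g hg u, ← hx, Equiv.apply_symm_apply]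
    have hye : y = g b' := by rw [← eqv_inl g hg b', ← hy, Equiv.apply_symm_apply]
    have h1 : (u : Fin n) ≠ g b' := fun h => u.2 ⟨b', h.symm⟩
    have h2 : g a ≠ (u : Fin n) := fun h => u.2 ⟨a, h⟩
    subst hxe hye
    simp [Matrix.transvection, Matrix.single, Matrix.one_apply, h1, h2]
  · have hxe : x = (u : Fin n) := by rw [← eqv_inr g hg u, ← hx, Equiv.apply_symm_apply]
    have hye : y = (v : Fin n) := by rw [← eqv_inr g hg v, ← hy, Equiv.apply_symm_apply]
    have h2 : g a ≠ (u : Fin n) := fun h => u.2 ⟨a, h⟩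
    subst hxe hye
    simp [Matrix.transvection, Matrix.single, Matrix.one_apply, h2,
      Subtype.coe_inj]

end ConjAux

open ConjAux in
/-- Lemma 2.1: two identities for `e_{ji}^m e_{ij}^d e_{ji}^{-m}` in `SL(n, ℤ)`,
for pairwise distinct indices `i, j, k` and arbitrary integers `m, d`. -/
theorem conj_identities (n : ℕ) (hn : 3 ≤ n) (i j k : Fin n)
    (hij : i ≠ j) (hjk : j ≠ k) (hik : i ≠ k) (m d : ℤ) :
    (E j i) ^ m * (E i j) ^ d * (E j i) ^ (-m) =
      (E j k) ^ m * (E k j) ^ d * (E j k) ^ (-m) *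
        ((E i j) ^ d) * ((E i k) ^ d) ^ (-m) *
        (E i k * (E k i) ^ d * (E i k)⁻¹) ^ (-m) *
        ((E j i) ^ d) ^ (-m ^ 2) * ((E j k) ^ d) ^ (m ^ 2) *
        ((E k i) ^ d) ^ m * ((E k j) ^ d)⁻¹ ∧
    (E j i) ^ m * (E i j) ^ d * (E j i) ^ (-m) =
      (E i k) ^ d * ((E j k) ^ d) ^ m *
        (E k j * (E j k) ^ d * (E k j)⁻¹) ^ (-m) *
        ((E j i) ^ d) ^ (-m ^ 2) * ((E k i) ^ d) ^ (-m ^ 2) *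
        ((E k i) ^ (-m) * (E i k) ^ d * (E k i) ^ m)⁻¹ *
        ((E i j) ^ d) * ((E k j) ^ d) ^ (-m) := by
  have hg : Function.Injective ![i, j, k] := by
    have h2 := hij.symm; have h3 := hjk.symm; have h4 := hik.symm
    intro a b hab
    fin_cases a <;> fin_cases b <;> simp_all
  have e01 : φ ![i,j,k] hg (E 0 1) = E i j := φ_E ![i,j,k] hg 0 1 h01
  have e10 : φ ![i,j,k] hg (E 1 0) = E j i := φ_E ![i,j,k] hg 1 0 h10
  have e02 : φ ![i,j,k] hg (E 0 2) = E i k := φ_E ![i,j,k] hg 0 2 h02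
  have e20 : φ ![i,j,k] hg (E 2 0) = E k i := φ_E ![i,j,k] hg 2 0 h20
  have e12 : φ ![i,j,k] hg (E 1 2) = E j k := φ_E ![i,j,k] hg 1 2 h12
  have e21 : φ ![i,j,k] hg (E 2 1) = E k j := φ_E ![i,j,k] hg 2 1 h21
  rw [← e01, ← e10, ← e02, ← e20, ← e12, ← e21]
  simp only [← map_zpow, ← map_inv, ← _root_.map_mul]
  exact ⟨congrArg _ (key1 m d), congrArg _ (key2 m d)⟩
end

section
/- Let n ≥ 3 and d ≥ 1, and let G₂ be the subgroup of SL(n,ℤ) generated by the set X₂ = { e_{ji}^m e_{ij}^d e_{ji}^{−m} : 1 ≤ i, j ≤ n with i ≠ j, m ∈ {0,1} }. Then for all 1 ≤ i, j ≤ n with i ≠ j, both e_{ji}² e_{ij}^d e_{ji}^{−2} and e_{ji}^{−1} e_{ij}^d e_{ji} belong to G₂. -/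
open Matrix

/-- `Tz i j a` is the transvection `e_{ij}^a` for `a : ℤ` (junk value `1` if `i = j`). -/
def Tz {n : ℕ} (i j : Fin n) (a : ℤ) : SLZ n :=
  if h : i ≠ j then ⟨Matrix.transvection i j a, Matrix.det_transvection_of_ne i j h a⟩ else 1

namespace MemG2Aux

variable {n : ℕ}

lemma Tz_val {i j : Fin n} (h : i ≠ j) (a : ℤ) :
    ((Tz i j a : SLZ n) : Matrix (Fin n) (Fin n) ℤ) = transvection i j a := by
  unfold Tz
  exact congrArg Subtype.val (dif_pos h)

lemma Tz_mul {i j : Fin n} (h : i ≠ j) (a b : ℤ) : Tz i j a * Tz i j b = Tz i j (a + b) := by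
  apply Subtype.ext
  simp [Tz, h, Matrix.SpecialLinearGroup.coe_mul, transvection_mul_transvection_same i j h]
  exact transvection_mul_transvection_same i j h a b

lemma Tz_zero {i j : Fin n} : Tz i j 0 = 1 := by
  by_cases h : i ≠ j
  · apply Subtype.ext; rw [Tz_val h]; simp
  · unfold Tz
    exact dif_neg h

lemma Tz_inv {i j : Fin n} (h : i ≠ j) (a : ℤ) : (Tz i j a)⁻¹ = Tz i j (-a) := by
  rw [inv_eq_iff_mul_eq_one, Tz_mul h, add_neg_cancel, Tz_zero]

lemma E_eq {i j : Fin n} (h : i ≠ j) : E i j = Tz i j 1 := by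
  simp [E, Tz, h]
  rfl

lemma E_zpow {i j : Fin n} (h : i ≠ j) (a : ℤ) : (E i j) ^ a = Tz i j a := by
  induction a using Int.induction_on with
  | zero => simpa using Tz_zero.symm
  | succ k ih => rw [_root_.zpow_add_one, ih, E_eq h, Tz_mul h]
  | pred k ih => rw [_root_.zpow_sub_one, ih, E_eq h, Tz_inv h, Tz_mul h, sub_eq_add_neg]

lemma E_pow {i j : Fin n} (h : i ≠ j) (m : ℕ) : (E i j) ^ m = Tz i j m := by
  rw [← zpow_natCast, E_zpow h]

lemma Tz_zpow {i j : Fin n} (h : i ≠ j) (c : ℤ) (a : ℤ) :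
    (Tz i j c) ^ a = Tz i j (a * c) := by
  induction a using Int.induction_on with
  | zero => simpa using Tz_zero.symm
  | succ k ih => rw [_root_.zpow_add_one, ih, Tz_mul h]; ring_nf
  | pred k ih => rw [_root_.zpow_sub_one, ih, Tz_inv h, Tz_mul h]; ring_nf

noncomputable abbrev S (i j : Fin n) : Matrix (Fin n) (Fin n) ℤ := single i j (1 : ℤ)

lemma tv_expand (i j : Fin n) (c : ℤ) :
    Matrix.transvection i j c = 1 + c • S i j := by
  rw [Matrix.transvection, smul_single, smul_eq_mul, mul_one]

lemma S_mul_same (i j l : Fin n) : S i j * S j l = S i l := by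
  rw [single_mul_single_same, one_mul]

lemma S_mul_ne {j k : Fin n} (i l : Fin n) (h : j ≠ k) : S i j * S k l = 0 :=
  by simp [S, h]

/-- The word identity for `e_{ji}⁻¹ e_{ij}^d e_{ji}`. -/
lemma W2 {i j k : Fin n} (hij : i ≠ j) (hik : i ≠ k) (hjk : j ≠ k) (e : ℤ) :
    Tz j i (-1) * Tz i j e * Tz j i 1 =
    Tz i k e * Tz j k (-e) * (Tz k j 1 * Tz j k e * Tz k j (-1)) * Tz j i (-e) *
      Tz k i (-e) * Tz i j e * Tz k j e * (Tz k i 1 * Tz i k (-e) * Tz k i (-1)) := by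
  apply Subtype.ext
  simp only [Tz_val hij, Tz_val hik, Tz_val hjk, Tz_val hij.symm, Tz_val hik.symm,
    Tz_val hjk.symm, Matrix.SpecialLinearGroup.coe_mul]
  simp only [tv_expand, mul_add, add_mul, one_mul, mul_one, smul_mul_assoc, mul_smul_comm,
    smul_smul, S_mul_same, S_mul_ne _ _ hij, S_mul_ne _ _ hij.symm, S_mul_ne _ _ hik,
    S_mul_ne _ _ hik.symm, S_mul_ne _ _ hjk, S_mul_ne _ _ hjk.symm, smul_zero, mul_zero,
    zero_mul, add_zero, zero_add]
  module

set_option maxHeartbeats 1000000 in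
/-- The word identity for `e_{ji}² e_{ij}^d e_{ji}⁻²`. -/
lemma W1 {i j k : Fin n} (hij : i ≠ j) (hik : i ≠ k) (hjk : j ≠ k) (e : ℤ) :
    Tz j i 2 * Tz i j e * Tz j i (-2) =
    (Tz j i 1 * Tz i j e * Tz j i (-1)) * Tz i k (-e) * Tz j k (-e) *
      (Tz j k 1 * Tz k j e * Tz j k (-1)) * Tz k i (-e) * Tz j i (-e) *
      (Tz k i 1 * Tz i k e * Tz k i (-1)) * Tz j k e * Tz j i (-e) *
      Tz j k e * Tz j i (-e) * Tz k j (-e) * Tz k i e * Tz k i e := by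
  apply Subtype.ext
  simp only [Tz_val hij, Tz_val hik, Tz_val hjk, Tz_val hij.symm, Tz_val hik.symm,
    Tz_val hjk.symm, Matrix.SpecialLinearGroup.coe_mul]
  simp only [tv_expand, mul_add, add_mul, one_mul, mul_one, smul_mul_assoc, mul_smul_comm,
    smul_smul, S_mul_same, S_mul_ne _ _ hij, S_mul_ne _ _ hij.symm, S_mul_ne _ _ hik,
    S_mul_ne _ _ hik.symm, S_mul_ne _ _ hjk, S_mul_ne _ _ hjk.symm, smul_zero, mul_zero,
    zero_mul, add_zero, zero_add]
  module

end MemG2Aux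

open MemG2Aux in
/-- Lemma 2.2 -/
theorem mem_G2 (n : ℕ) (hn : 3 ≤ n) (d : ℕ) (hd : 1 ≤ d) :
    ∀ i j : Fin n, i ≠ j →
      ((E j i) ^ 2 * (E i j) ^ d * ((E j i) ^ 2)⁻¹ ∈
          Subgroup.closure {x : SLZ n | ∃ i' j' : Fin n, ∃ m : ℕ,
            i' ≠ j' ∧ m ≤ 1 ∧ x = (E j' i') ^ m * (E i' j') ^ d * ((E j' i') ^ m)⁻¹} ∧
        (E j i)⁻¹ * (E i j) ^ d * (E j i) ∈
          Subgroup.closure {x : SLZ n | ∃ i' j' : Fin n, ∃ m : ℕ,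
            i' ≠ j' ∧ m ≤ 1 ∧ x = (E j' i') ^ m * (E i' j') ^ d * ((E j' i') ^ m)⁻¹}) := by
  intro i j hij
  set H : Subgroup (SLZ n) := Subgroup.closure {x : SLZ n | ∃ i' j' : Fin n, ∃ m : ℕ,
      i' ≠ j' ∧ m ≤ 1 ∧ x = (E j' i') ^ m * (E i' j') ^ d * ((E j' i') ^ m)⁻¹} with hH
  -- a third index
  obtain ⟨k, hki, hkj⟩ : ∃ k : Fin n, k ≠ i ∧ k ≠ j := by
    by_contra hcon
    push_neg at hcon
    have hsub : (Finset.univ : Finset (Fin n)) ⊆ {i, j} := by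
      intro x _
      rcases eq_or_ne x i with h | h
      · simp [h]
      · simp [hcon x h]
    have hcard : (n : ℕ) ≤ 2 := by
      calc n = (Finset.univ : Finset (Fin n)).card := by simp
        _ ≤ ({i, j} : Finset (Fin n)).card := Finset.card_le_card hsub
        _ ≤ 2 := (Finset.card_insert_le _ _).trans (by simp)
    omega
  -- base membership facts
  have memA : ∀ p q : Fin n, p ≠ q → ∀ a : ℤ, Tz p q (a * d) ∈ H := by
    intro p q hpq a
    have h0 : (E p q) ^ d ∈ H := by
      apply Subgroup.subset_closure
      exact ⟨p, q, 0, hpq, Nat.zero_le 1, by simp⟩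
    have h1 := zpow_mem h0 a
    rwa [E_pow hpq, Tz_zpow hpq] at h1
  have memB : ∀ p q : Fin n, p ≠ q → ∀ a : ℤ,
      Tz q p 1 * Tz p q (a * d) * Tz q p (-1) ∈ H := by
    intro p q hpq a
    have h0 : (E q p) * (E p q) ^ d * (E q p)⁻¹ ∈ H := by
      apply Subgroup.subset_closure
      exact ⟨p, q, 1, hpq, le_refl 1, by simp⟩
    have h1 := zpow_mem h0 a
    rw [conj_zpow, E_pow hpq, Tz_zpow hpq, E_eq hpq.symm, Tz_inv hpq.symm] at h1
    exact h1
  have hA : ∀ p q : Fin n, p ≠ q → Tz p q (d : ℤ) ∈ H := fun p q h => by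
    simpa using memA p q h 1
  have hA' : ∀ p q : Fin n, p ≠ q → Tz p q (-(d : ℤ)) ∈ H := fun p q h => by
    simpa using memA p q h (-1)
  have hB : ∀ p q : Fin n, p ≠ q → Tz q p 1 * Tz p q (d : ℤ) * Tz q p (-1) ∈ H :=
    fun p q h => by simpa using memB p q h 1
  have hB' : ∀ p q : Fin n, p ≠ q → Tz q p 1 * Tz p q (-(d : ℤ)) * Tz q p (-1) ∈ H :=
    fun p q h => by simpa using memB p q h (-1)
  have hik : i ≠ k := hki.symm
  have hjk : j ≠ k := hkj.symm
  constructor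
  · -- part 1 : e_{ji}² e_{ij}^d e_{ji}⁻²
    have e2 : (E j i) ^ 2 = Tz j i 2 := by simpa using E_pow hij.symm 2
    rw [e2, E_pow hij d, Tz_inv hij.symm, W1 hij hik hjk (d : ℤ)]
    exact mul_mem (mul_mem (mul_mem (mul_mem (mul_mem (mul_mem (mul_mem (mul_mem (mul_mem
      (mul_mem (mul_mem (mul_mem (mul_mem (hB i j hij) (hA' i k hik)) (hA' j k hjk))
      (hB k j hkj)) (hA' k i hki)) (hA' j i hij.symm)) (hB i k hik)) (hA j k hjk))
      (hA' j i hij.symm)) (hA j k hjk)) (hA' j i hij.symm)) (hA' k j hkj)) (hA k i hki))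
      (hA k i hki)
  · -- part 2 : e_{ji}⁻¹ e_{ij}^d e_{ji}
    rw [E_eq hij.symm, Tz_inv hij.symm, E_pow hij d, W2 hij hik hjk (d : ℤ)]
    exact mul_mem (mul_mem (mul_mem (mul_mem (mul_mem (mul_mem (mul_mem
      (hA i k hik) (hA' j k hjk)) (hB j k hjk)) (hA' j i hij.symm)) (hA' k i hki))
      (hA i j hij)) (hA k j hkj)) (hB' i k hik)
end

section
/- For all integers n ≥ 2, the level-2 principal congruence subgroup Γ_2(n) of SL(n,ℤ) is equal to the subgroup of SL(n,ℤ) generated by the matrices E_{ij} := e_{ij}² for all 1 ≤ i, j ≤ n with i ≠ j, together with the matrices F_{1k} := e_{1k}² · e_{k1}^{−2} · (e_{k1} e_{1k}² e_{k1}^{−1}) for all 2 ≤ k ≤ n. -/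
open Matrix

/-- The level-`d` principal congruence subgroup of `SL(n, ℤ)`:
the kernel of the reduction map `SL(n, ℤ) → SL(n, ℤ/dℤ)`. -/
def Gamma (d n : ℕ) : Subgroup (SLZ n) :=
  (Matrix.SpecialLinearGroup.map (n := Fin n) (Int.castRingHom (ZMod d))).ker

namespace GammaTwo

variable {n : ℕ}

/-- Transvection as an element of `SL(n,ℤ)`. -/
def Tv (i j : Fin n) (h : i ≠ j) (c : ℤ) : SLZ n :=
  ⟨Matrix.transvection i j c, Matrix.det_transvection_of_ne i j h c⟩

@[simp] lemma Tv_coe (i j : Fin n) (h : i ≠ j) (c : ℤ) :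
    (Tv i j h c : Matrix (Fin n) (Fin n) ℤ) = Matrix.transvection i j c := rfl

lemma Tv_mul (i j : Fin n) (h : i ≠ j) (c d : ℤ) :
    Tv i j h c * Tv i j h d = Tv i j h (c + d) :=
  Subtype.ext (Matrix.transvection_mul_transvection_same i j h c d)

@[simp] lemma Tv_zero (i j : Fin n) (h : i ≠ j) : Tv i j h 0 = 1 :=
  Subtype.ext (Matrix.transvection_zero i j)

lemma E_eq (i j : Fin n) (h : i ≠ j) : E i j = Tv i j h 1 := by
  simp [E, h, Tv]; rfl

lemma Tv_inv (i j : Fin n) (h : i ≠ j) (c : ℤ) : (Tv i j h c)⁻¹ = Tv i j h (-c) := by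
  rw [inv_eq_iff_mul_eq_one, Tv_mul, add_neg_cancel, Tv_zero]

lemma Tv_zpow (i j : Fin n) (h : i ≠ j) (c d : ℤ) :
    (Tv i j h c) ^ d = Tv i j h (c * d) := by
  induction d using Int.induction_on with
  | zero => simp
  | succ k ih => rw [_root_.zpow_add_one, ih, Tv_mul]; ring_nf
  | pred k ih => rw [_root_.zpow_sub_one, ih, Tv_inv, Tv_mul]; ring_nf

end GammaTwo

namespace GammaTwo

variable {n : ℕ}

/-- The generating set. -/
def gens (z : Fin n) : Set (SLZ n) :=
  {x : SLZ n | ∃ i j : Fin n, i ≠ j ∧ x = (E i j) ^ 2} ∪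
  {x : SLZ n | ∃ k : Fin n, k ≠ z ∧
      x = (E z k) ^ 2 * ((E k z) ^ 2)⁻¹ *
        (E k z * (E z k) ^ 2 * (E k z)⁻¹)}

def H (z : Fin n) : Subgroup (SLZ n) := Subgroup.closure (gens z)

lemma Tv2_mem (z : Fin n) (i j : Fin n) (h : i ≠ j) (c : ℤ) :
    Tv i j h (2 * c) ∈ H z := by
  have h1 : (E i j ^ 2 : SLZ n) = Tv i j h 2 := by
    rw [E_eq i j h, pow_two, Tv_mul]; norm_num
  have h2 : Tv i j h (2 * c) = (Tv i j h 2) ^ c := by rw [Tv_zpow]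
  rw [h2, ← h1]
  refine zpow_mem ?_ c
  apply Subgroup.subset_closure
  exact Or.inl ⟨i, j, h, rfl⟩

/-- Diagonal sign matrix with `-1` at positions `k` and `m`. -/
def Dm (k m : Fin n) (hkm : k ≠ m) : SLZ n :=
  ⟨Matrix.diagonal (fun i => if i = k ∨ i = m then -1 else 1), by
    rw [Matrix.det_diagonal]
    rw [← Finset.mul_prod_erase Finset.univ _ (Finset.mem_univ k),
      ← Finset.mul_prod_erase _ _
        (Finset.mem_erase.2 ⟨hkm.symm, Finset.mem_univ m⟩)]
    rw [Finset.prod_eq_one (fun i hi => ?_)]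
    · simp
    · simp only [Finset.mem_erase] at hi
      exact if_neg (by push_neg; exact ⟨hi.2.1, hi.1⟩)⟩

@[simp] lemma Dm_coe (k m : Fin n) (hkm : k ≠ m) :
    (Dm k m hkm : Matrix (Fin n) (Fin n) ℤ)
      = Matrix.diagonal (fun i => if i = k ∨ i = m then -1 else 1) := rfl


lemma transvection_sign_identity (z k : Fin n) (hzk : z ≠ k) :
    Matrix.transvection z k (1+1 : ℤ) * Matrix.transvection k z (-1) *
      (Matrix.transvection z k (1+1) * Matrix.transvection k z (-1)) =
    Matrix.diagonal (fun i => if i = z ∨ i = k then (-1 : ℤ) else 1) := by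
  have hkz : k ≠ z := hzk.symm
  set u := single z k (1:ℤ) with hu
  set v := single k z (1:ℤ) with hv
  set w := single z z (1:ℤ) with hw
  set q := single k k (1:ℤ) with hq
  have uu : u * u = 0 := Matrix.single_mul_single_of_ne 1 z k _ hkz 1
  have uv : u * v = w := by rw [hu, hv, hw, single_mul_single_same]; norm_num
  have uw : u * w = 0 := Matrix.single_mul_single_of_ne 1 z k _ hkz 1
  have vu : v * u = q := by rw [hu, hv, hq, single_mul_single_same]; norm_num
  have vv : v * v = 0 := Matrix.single_mul_single_of_ne 1 k z _ hzk 1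
  have vw : v * w = v := by rw [hv, hw, single_mul_single_same]; norm_num
  have wu : w * u = u := by rw [hu, hw, single_mul_single_same]; norm_num
  have wv : w * v = 0 := Matrix.single_mul_single_of_ne 1 z z _ hzk 1
  have ww : w * w = w := by rw [hw, single_mul_single_same]; norm_num
  have t1 : transvection z k (1+1:ℤ) = 1 + (2:ℤ) • u := by
    rw [Matrix.transvection, smul_single]; norm_num
  have t2 : transvection k z (-1:ℤ) = 1 + (-1:ℤ) • v := by
    rw [Matrix.transvection, smul_single]; norm_num
  have m3 : (1 : Matrix (Fin n) (Fin n) ℤ) + (-2:ℤ) • w + (-2:ℤ) • q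
      = Matrix.diagonal (fun i => if i = z ∨ i = k then (-1 : ℤ) else 1) := by
    rw [hw, hq]
    ext a b
    simp only [Matrix.add_apply, Matrix.one_apply, Matrix.smul_apply, Matrix.single,
      Matrix.of_apply, Matrix.diagonal_apply, smul_eq_mul]
    split_ifs <;> simp_all <;> omega
  rw [t1, t2, ← m3]
  simp only [mul_add, add_mul, one_mul, mul_one, smul_mul_assoc, mul_smul_comm, smul_smul,
    uu, uv, uw, vu, vv, vw, wu, wv, ww, smul_zero, add_zero, zero_add]
  module

lemma F_eq_Dm (z k : Fin n) (h : k ≠ z) :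
    (E z k) ^ 2 * ((E k z) ^ 2)⁻¹ * (E k z * (E z k) ^ 2 * (E k z)⁻¹)
      = Dm z k h.symm := by
  rw [E_eq z k h.symm, E_eq k z h]
  rw [sq, sq, Tv_mul, Tv_mul, Tv_inv, Tv_inv]
  have e1 : Tv z k h.symm (1+1) * Tv k z h (-(1+1)) *
      (Tv k z h 1 * Tv z k h.symm (1+1) * Tv k z h (-1))
      = (Tv z k h.symm (1+1) * Tv k z h (-1)) * (Tv z k h.symm (1+1) * Tv k z h (-1)) := by
    simp only [mul_assoc]
    congr 1
    rw [← mul_assoc (Tv k z h (-(1+1))) (Tv k z h 1), Tv_mul]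
    norm_num
  rw [e1]
  apply Subtype.ext
  have hzk : z ≠ k := h.symm
  simp only [Matrix.SpecialLinearGroup.coe_mul, Tv_coe, Dm_coe]
  exact transvection_sign_identity z k hzk

end GammaTwo

namespace GammaTwo

variable {n : ℕ}

lemma Dm_symm (k m : Fin n) (h : k ≠ m) : Dm k m h = Dm m k h.symm := by
  apply Subtype.ext
  simp only [Dm_coe]
  refine congrArg _ ?_
  funext i
  by_cases h1 : i = k <;> by_cases h2 : i = m <;> simp [h1, h2]

lemma Dm_mul_Dm (z i k : Fin n) (hzi : z ≠ i) (hzk : z ≠ k) (hik : i ≠ k) :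
    Dm z i hzi * Dm z k hzk = Dm i k hik := by
  apply Subtype.ext
  simp only [Matrix.SpecialLinearGroup.coe_mul, Dm_coe, Matrix.diagonal_mul_diagonal]
  refine congrArg _ ?_
  funext x
  by_cases h1 : x = z <;> by_cases h2 : x = i <;> by_cases h3 : x = k <;> simp_all

lemma Dm_mem (z : Fin n) (k m : Fin n) (hkm : k ≠ m) (hzk : k = z ∨ m = z ∨ (z ≠ k ∧ z ≠ m)) :
    Dm k m hkm ∈ H z := by
  have base : ∀ (m' : Fin n) (h : z ≠ m'), Dm z m' h ∈ H z := by
    intro m' h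
    apply Subgroup.subset_closure
    right
    exact ⟨m', h.symm, (F_eq_Dm z m' h.symm).symm⟩
  rcases hzk with rfl | rfl | ⟨h1, h2⟩
  · exact base m hkm
  · rw [Dm_symm]; exact base k hkm.symm
  · rw [← Dm_mul_Dm z k m h1 h2 hkm]
    exact mul_mem (base k h1) (base m h2)

lemma mem_Gamma_iff (A : SLZ n) :
    A ∈ Gamma 2 n ↔ ∀ i j : Fin n, ((A.1 i j : ℤ) : ZMod 2) = if i = j then 1 else 0 := by
  rw [Gamma, MonoidHom.mem_ker]; refine Subtype.ext_iff.trans ?_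
  change (A.1.map (Int.cast : ℤ → ZMod 2)) = 1 ↔ _
  rw [← Matrix.ext_iff]
  constructor <;> intro hh i j <;> simpa [Matrix.map_apply, Matrix.one_apply] using hh i j

end GammaTwo

namespace GammaTwo

variable {n : ℕ}

lemma Tv2_Gamma (i j : Fin n) (h : i ≠ j) (c : ℤ) : Tv i j h (2 * c) ∈ Gamma 2 n := by
  rw [mem_Gamma_iff]
  intro a b
  simp only [Tv_coe, Matrix.transvection, Matrix.add_apply, Matrix.one_apply,
    Matrix.single, Matrix.of_apply]
  push_cast
  have : ((2 : ZMod 2)) = 0 := by decide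
  split_ifs <;> simp [this, mul_assoc] <;> ring_nf <;>
    simp [show ((2 : ZMod 2)) = 0 from by decide]

lemma Dm_Gamma (k m : Fin n) (h : k ≠ m) : Dm k m h ∈ Gamma 2 n := by
  rw [mem_Gamma_iff]
  intro a b
  simp only [Dm_coe, Matrix.diagonal_apply]
  split_ifs <;> simp_all <;> decide

lemma even_off {A : SLZ n} (hA : A ∈ Gamma 2 n) {i j : Fin n} (h : i ≠ j) :
    (2 : ℤ) ∣ A.1 i j := by
  rw [mem_Gamma_iff] at hA
  have := hA i j
  rw [if_neg h] at this
  exact (ZMod.intCast_zmod_eq_zero_iff_dvd _ 2).1 this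

lemma odd_diag {A : SLZ n} (hA : A ∈ Gamma 2 n) (i : Fin n) :
    ¬ (2 : ℤ) ∣ A.1 i i := by
  rw [mem_Gamma_iff] at hA
  have h1 := hA i i
  rw [if_pos rfl] at h1
  intro hdvd
  rw [(ZMod.intCast_zmod_eq_zero_iff_dvd _ 2).2 hdvd] at h1
  exact absurd h1 (by decide)

end GammaTwo

namespace GammaTwo

variable {n : ℕ}

lemma exists_red (a b : ℤ) (hb : b ≠ 0) (hpar : Odd (a + b)) :
    ∃ c : ℤ, (a + 2 * b * c).natAbs < b.natAbs := by
  have habs : 0 < |b| := abs_pos.2 hb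
  have hd : 0 < 2 * |b| := by positivity
  have hr0 : 0 ≤ a % (2 * |b|) := Int.emod_nonneg a (by positivity)
  have hr1 : a % (2 * |b|) < 2 * |b| := Int.emod_lt_of_pos a hd
  obtain ⟨q, hq⟩ : (2 * b) ∣ (a - a % (2 * |b|)) := by
    have h2 : (2 * |b|) ∣ (a - a % (2 * |b|)) := Int.dvd_self_sub_of_emod_eq rfl
    have h3 : |2 * b| = 2 * |b| := by rw [abs_mul]; norm_num
    rw [← abs_dvd, h3]; exact h2
  set r := a % (2 * |b|) with hrdef
  obtain ⟨m, hm⟩ := hpar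
  have hP : a - r = 2 * (b * q) := by linear_combination hq
  rcases abs_choice b with hB | hB
  · by_cases hle : r < |b|
    · refine ⟨-q, ?_⟩
      have hval : a + 2 * b * (-q) = r := by linear_combination hq
      rw [hval]; omega
    · refine ⟨-q - 1, ?_⟩
      have hval : a + 2 * b * (-q - 1) = r - 2 * |b| := by rw [hB]; linear_combination hq
      rw [hval]; omega
  · by_cases hle : r < |b|
    · refine ⟨-q, ?_⟩
      have hval : a + 2 * b * (-q) = r := by linear_combination hq
      rw [hval]; omega
    · refine ⟨-q + 1, ?_⟩
      have hval : a + 2 * b * (-q + 1) = r - 2 * |b| := by rw [hB]; linear_combination hq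
      rw [hval]; omega

/-- `M` agrees with the identity matrix on the first `k` rows and columns. -/
def Blk (k : ℕ) (M : Matrix (Fin n) (Fin n) ℤ) : Prop :=
  ∀ i j : Fin n, (i.val < k ∨ j.val < k) → M i j = if i = j then 1 else 0

lemma row_op_same {i j : Fin n} (h : i ≠ j) (c : ℤ) (A : SLZ n) (s : Fin n) :
    ((Tv i j h c * A : SLZ n) : Matrix (Fin n) (Fin n) ℤ) i s = A.1 i s + c * A.1 j s := by
  rw [Matrix.SpecialLinearGroup.coe_mul, Tv_coe]
  exact Matrix.transvection_mul_apply_same i j s c A.1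

lemma row_op_ne {i j : Fin n} (h : i ≠ j) (c : ℤ) (A : SLZ n) {r : Fin n} (s : Fin n)
    (hr : r ≠ i) :
    ((Tv i j h c * A : SLZ n) : Matrix (Fin n) (Fin n) ℤ) r s = A.1 r s := by
  rw [Matrix.SpecialLinearGroup.coe_mul, Tv_coe]
  exact Matrix.transvection_mul_apply_of_ne i j r s hr c A.1

lemma col_op_same {i j : Fin n} (h : i ≠ j) (c : ℤ) (A : SLZ n) (r : Fin n) :
    ((A * Tv i j h c : SLZ n) : Matrix (Fin n) (Fin n) ℤ) r j = A.1 r j + c * A.1 r i := by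
  rw [Matrix.SpecialLinearGroup.coe_mul, Tv_coe]
  exact Matrix.mul_transvection_apply_same i j r c A.1

lemma col_op_ne {i j : Fin n} (h : i ≠ j) (c : ℤ) (A : SLZ n) (r : Fin n) {s : Fin n}
    (hs : s ≠ j) :
    ((A * Tv i j h c : SLZ n) : Matrix (Fin n) (Fin n) ℤ) r s = A.1 r s := by
  rw [Matrix.SpecialLinearGroup.coe_mul, Tv_coe]
  exact Matrix.mul_transvection_apply_of_ne i j r s hs c A.1

lemma sign_op {a b : Fin n} (h : a ≠ b) (A : SLZ n) (r s : Fin n) :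
    ((Dm a b h * A : SLZ n) : Matrix (Fin n) (Fin n) ℤ) r s =
      if r = a ∨ r = b then -A.1 r s else A.1 r s := by
  rw [Matrix.SpecialLinearGroup.coe_mul, Dm_coe, Matrix.diagonal_mul]
  split_ifs <;> ring

lemma Blk_row_op {A : SLZ n} {k : ℕ} (hBlk : Blk k A.1) {i j : Fin n} (h : i ≠ j) (c : ℤ)
    (hi : k ≤ i.val) (hj : k ≤ j.val) : Blk k (Tv i j h c * A : SLZ n).1 := by
  intro r s hrs
  by_cases hr : r = i
  · subst hr
    have hs : s.val < k := by omega
    rw [row_op_same h c A s, hBlk r s (Or.inr hs), hBlk j s (Or.inr hs),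
      if_neg (show ¬ r = s by intro hh; subst hh; omega),
      if_neg (show ¬ j = s by intro hh; subst hh; omega)]
    ring
  · rw [row_op_ne h c A s hr]
    exact hBlk r s hrs

lemma Blk_col_op {A : SLZ n} {k : ℕ} (hBlk : Blk k A.1) {i j : Fin n} (h : i ≠ j) (c : ℤ)
    (hi : k ≤ i.val) (hj : k ≤ j.val) : Blk k (A * Tv i j h c : SLZ n).1 := by
  intro r s hrs
  by_cases hs : s = j
  · subst hs
    have hr : r.val < k := by omega
    rw [col_op_same h c A r, hBlk r s (Or.inl hr), hBlk r i (Or.inl hr),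
      if_neg (show ¬ r = s by intro hh; subst hh; omega),
      if_neg (show ¬ r = i by intro hh; subst hh; omega)]
    ring
  · rw [col_op_ne h c A r hs]
    exact hBlk r s hrs

lemma Blk_sign_op {A : SLZ n} {k : ℕ} (hBlk : Blk k A.1) {a b : Fin n} (h : a ≠ b)
    (ha : k ≤ a.val) (hb : k ≤ b.val) : Blk k (Dm a b h * A : SLZ n).1 := by
  intro r s hrs
  rw [sign_op h A r s]
  by_cases hr : r = a ∨ r = b
  · rw [if_pos hr]
    have hs : s.val < k := by rcases hr with rfl | rfl <;> omega
    rw [hBlk r s (Or.inr hs), if_neg (show ¬ r = s by intro hh; subst hh; omega)]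
    ring
  · rw [if_neg hr]
    exact hBlk r s hrs

end GammaTwo
namespace GammaTwo

variable {n : ℕ}

lemma Dm_mem' (z : Fin n) (k m : Fin n) (h : k ≠ m) : Dm k m h ∈ H z := by
  apply Dm_mem
  by_cases h1 : k = z
  · exact Or.inl h1
  · by_cases h2 : m = z
    · exact Or.inr (Or.inl h2)
    · exact Or.inr (Or.inr ⟨fun hh => h1 hh.symm, fun hh => h2 hh.symm⟩)

lemma index_ge {A : SLZ n} {k : Fin n} (hBlk : Blk k.val A.1) {i : Fin n}
    (hik : i ≠ k) (hne : A.1 i k ≠ 0) : k.val < i.val := by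
  by_contra hcon
  push_neg at hcon
  have : i.val < k.val := by
    rcases lt_or_eq_of_le hcon with h | h
    · exact h
    · exact absurd (Fin.ext h) hik
  exact hne (by rw [hBlk i k (Or.inl this), if_neg hik])

lemma col_reduce (z k : Fin n) :
    ∀ (N : ℕ) (A : SLZ n), A ∈ Gamma 2 n → Blk k.val A.1 →
      (∑ i, (A.1 i k).natAbs) < N →
      ∃ B : SLZ n, B ∈ H z ∧ B ∈ Gamma 2 n ∧ Blk k.val (B * A : SLZ n).1 ∧
        (∀ i, i ≠ k → (B * A : SLZ n).1 i k = 0) ∧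
        (B * A : SLZ n).1 k k = 1 := by
  intro N
  induction N with
  | zero => intro A _ _ h; exact absurd h (by omega)
  | succ N ih =>
    intro A hA hBlk hsum
    by_cases hz : ∀ i, i ≠ k → A.1 i k = 0
    · -- column already clear below/above; pivot is a unit
      have hpiv : A.1 k k = 1 ∨ A.1 k k = -1 := by
        have h1 : ((A⁻¹ * A : SLZ n) : Matrix (Fin n) (Fin n) ℤ) k k
            = (1 : Matrix (Fin n) (Fin n) ℤ) k k := by
          rw [inv_mul_cancel, Matrix.SpecialLinearGroup.coe_one]
        rw [Matrix.SpecialLinearGroup.coe_mul, Matrix.mul_apply, Matrix.one_apply_eq] at h1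
        have h2 : ∑ j, (A⁻¹ : SLZ n).1 k j * A.1 j k = (A⁻¹ : SLZ n).1 k k * A.1 k k :=
          Finset.sum_eq_single k (fun j _ hj => by rw [hz j hj, mul_zero])
            (fun hk => absurd (Finset.mem_univ k) hk)
        rw [h2] at h1
        exact Int.isUnit_iff.1 (IsUnit.of_mul_eq_one _ ((mul_comm _ _).trans h1))
      rcases hpiv with hpiv | hpiv
      · exact ⟨1, one_mem _, one_mem _, by rwa [one_mul], by rw [one_mul]; exact hz,
          by rw [one_mul]; exact hpiv⟩
      · -- pivot = -1 : fix the sign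
        by_cases hk1 : k.val + 1 < n
        · set m : Fin n := ⟨k.val + 1, hk1⟩ with hm
          have hkm : k ≠ m := by
            intro hh
            have := congrArg Fin.val hh
            simp [hm] at this
          refine ⟨Dm k m hkm, Dm_mem' z k m hkm, Dm_Gamma k m hkm,
            Blk_sign_op hBlk hkm le_rfl (by simp [hm]), ?_, ?_⟩
          · intro i hik
            rw [sign_op hkm A i k]
            split_ifs <;> simp [hz i hik]
          · rw [sign_op hkm A k k, if_pos (Or.inl rfl), hpiv]; ring
        · -- k is the last index : contradiction with det = 1
          exfalso
          have hdiag : A.1 = Matrix.diagonal (fun i => if i = k then (-1 : ℤ) else 1) := by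
            ext i j
            by_cases hij : i = j
            · subst hij
              by_cases hik : i = k
              · subst hik; rw [Matrix.diagonal_apply_eq, if_pos rfl]; exact hpiv
              · have hival : i.val < k.val := by
                  have := i.isLt; have := k.isLt
                  have hne : i.val ≠ k.val := fun hh => hik (Fin.ext hh)
                  omega
                rw [Matrix.diagonal_apply_eq, if_neg hik, hBlk i i (Or.inl hival), if_pos rfl]
            · rw [Matrix.diagonal_apply_ne _ hij]
              by_cases h1 : i.val < k.val ∨ j.val < k.val
              · rw [hBlk i j h1, if_neg hij]
              · push_neg at h1
                have := i.isLt; have := j.isLt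
                have e1 : i = k := Fin.ext (by omega)
                have e2 : j = k := Fin.ext (by omega)
                exact absurd (e1.trans e2.symm) hij
          have hdet : A.1.det = -1 := by
            rw [hdiag, Matrix.det_diagonal,
              ← Finset.mul_prod_erase Finset.univ _ (Finset.mem_univ k), if_pos rfl,
              Finset.prod_eq_one (fun i hi => if_neg (Finset.mem_erase.1 hi).1)]
            ring
          rw [A.2] at hdet
          norm_num at hdet
    · -- some entry below the pivot is nonzero
      push_neg at hz
      obtain ⟨i, hik, hi0⟩ := hz
      have hival : k.val < i.val := index_ge hBlk hik hi0
      have hki : k ≠ i := fun hh => hik (hh.symm)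
      have hpodd : ¬ (2:ℤ) ∣ A.1 k k := odd_diag hA k
      have hpne : A.1 k k ≠ 0 := fun hh => hpodd (by rw [hh]; exact dvd_zero 2)
      obtain ⟨e, he⟩ : (2:ℤ) ∣ A.1 i k := even_off hA hik
      by_cases hsmall : ∃ i', i' ≠ k ∧ A.1 i' k ≠ 0 ∧ (A.1 i' k).natAbs < (A.1 k k).natAbs
      · -- reduce the pivot using a small entry
        obtain ⟨i', hik', hi0', hlt'⟩ := hsmall
        have hival' : k.val < i'.val := index_ge hBlk hik' hi0'
        have hki' : k ≠ i' := fun hh => hik' (hh.symm)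
        obtain ⟨e', he'⟩ : (2:ℤ) ∣ A.1 i' k := even_off hA hik'
        obtain ⟨c, hc⟩ : ∃ c : ℤ, (A.1 k k + 2 * (A.1 i' k) * c).natAbs < (A.1 i' k).natAbs := by
          apply exists_red _ _ hi0'
          rw [Int.odd_iff]
          omega
        set B0 : SLZ n := Tv k i' hki' (2 * c) with hB0
        have hB0H : B0 ∈ H z := Tv2_mem z k i' hki' c
        have hB0G : B0 ∈ Gamma 2 n := Tv2_Gamma k i' hki' c
        have hnewBlk : Blk k.val (B0 * A : SLZ n).1 :=
          Blk_row_op hBlk hki' (2 * c) le_rfl (le_of_lt hival')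
        have hpivnew : (B0 * A : SLZ n).1 k k
            = A.1 k k + 2 * (A.1 i' k) * c := by
          rw [hB0, row_op_same hki' (2*c) A k]; ring
        have hother : ∀ r, r ≠ k → (B0 * A : SLZ n).1 r k = A.1 r k := by
          intro r hr
          rw [hB0, row_op_ne hki' (2*c) A k hr]
        have hsum' : (∑ r, ((B0 * A : SLZ n).1 r k).natAbs) < N := by
          have hlt : (∑ r, ((B0 * A : SLZ n).1 r k).natAbs)
              < ∑ r, (A.1 r k).natAbs := by
            apply Finset.sum_lt_sum
            · intro r _
              by_cases hr : r = k
              · subst hr; rw [hpivnew]; omega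
              · rw [hother r hr]
            · exact ⟨k, Finset.mem_univ k, by rw [hpivnew]; omega⟩
          omega
        obtain ⟨B, hBH, hBG, hB1, hB2, hB3⟩ := ih (B0 * A) (mul_mem hB0G hA) hnewBlk hsum'
        refine ⟨B * B0, mul_mem hBH hB0H, mul_mem hBG hB0G, ?_, ?_, ?_⟩
        · rwa [mul_assoc]
        · rw [mul_assoc]; exact hB2
        · rw [mul_assoc]; exact hB3
      · -- reduce the entry A i k modulo the pivot
        push_neg at hsmall
        have hge : (A.1 k k).natAbs ≤ (A.1 i k).natAbs := hsmall i hik hi0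
        obtain ⟨c, hc⟩ : ∃ c : ℤ, (A.1 i k + 2 * (A.1 k k) * c).natAbs < (A.1 k k).natAbs := by
          apply exists_red _ _ hpne
          rw [Int.odd_iff]
          omega
        set B0 : SLZ n := Tv i k hik (2 * c) with hB0
        have hB0H : B0 ∈ H z := Tv2_mem z i k hik c
        have hB0G : B0 ∈ Gamma 2 n := Tv2_Gamma i k hik c
        have hnewBlk : Blk k.val (B0 * A : SLZ n).1 :=
          Blk_row_op hBlk hik (2 * c) (le_of_lt hival) le_rfl
        have hentnew : (B0 * A : SLZ n).1 i k
            = A.1 i k + 2 * (A.1 k k) * c := by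
          rw [hB0, row_op_same hik (2*c) A k]; ring
        have hother : ∀ r, r ≠ i → (B0 * A : SLZ n).1 r k = A.1 r k := by
          intro r hr
          rw [hB0, row_op_ne hik (2*c) A k hr]
        have hsum' : (∑ r, ((B0 * A : SLZ n).1 r k).natAbs) < N := by
          have hlt : (∑ r, ((B0 * A : SLZ n).1 r k).natAbs)
              < ∑ r, (A.1 r k).natAbs := by
            apply Finset.sum_lt_sum
            · intro r _
              by_cases hr : r = i
              · subst hr; rw [hentnew]; omega
              · rw [hother r hr]
            · exact ⟨i, Finset.mem_univ i, by rw [hentnew]; omega⟩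
          omega
        obtain ⟨B, hBH, hBG, hB1, hB2, hB3⟩ := ih (B0 * A) (mul_mem hB0G hA) hnewBlk hsum'
        refine ⟨B * B0, mul_mem hBH hB0H, mul_mem hBG hB0G, ?_, ?_, ?_⟩
        · rwa [mul_assoc]
        · rw [mul_assoc]; exact hB2
        · rw [mul_assoc]; exact hB3

end GammaTwo

namespace GammaTwo

variable {n : ℕ}

lemma row_reduce (z k : Fin n) :
    ∀ (N : ℕ) (A : SLZ n), A ∈ Gamma 2 n → Blk k.val A.1 →
      (∀ i, i ≠ k → A.1 i k = 0) → A.1 k k = 1 →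
      (∑ j, (A.1 k j).natAbs) < N →
      ∃ C : SLZ n, C ∈ H z ∧ C ∈ Gamma 2 n ∧ Blk (k.val + 1) (A * C : SLZ n).1 := by
  intro N
  induction N with
  | zero => intro A _ _ _ _ h; exact absurd h (by omega)
  | succ N ih =>
    intro A hA hBlk hcol hpiv hsum
    by_cases hz : ∀ j, j ≠ k → A.1 k j = 0
    · refine ⟨1, one_mem _, one_mem _, ?_⟩
      rw [mul_one]
      intro i j hij
      by_cases h1 : i.val < k.val ∨ j.val < k.val
      · exact hBlk i j h1
      · push_neg at h1
        by_cases hik : i = k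
        · subst hik
          by_cases hjk : j = i
          · rw [hjk, if_pos rfl]; exact hpiv
          · rw [hz j hjk, if_neg (fun hh => hjk hh.symm)]
        · have hjk : j = k := by
            have := i.isLt; have := j.isLt
            rcases hij with h | h
            · exact absurd (Fin.ext (by omega) : i = k) hik
            · exact Fin.ext (by omega)
          subst hjk
          rw [hcol i hik, if_neg hik]
    · push_neg at hz
      obtain ⟨j, hjk, hj0⟩ := hz
      have hjval : k.val < j.val := by
        by_contra hcon
        push_neg at hcon
        have : j.val < k.val := by
          rcases lt_or_eq_of_le hcon with h | h
          · exact h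
          · exact absurd (Fin.ext h) hjk
        exact hj0 (by rw [hBlk k j (Or.inr this), if_neg (fun hh => hjk hh.symm)])
      have hkj : k ≠ j := fun hh => hjk hh.symm
      obtain ⟨c, hc⟩ : (2:ℤ) ∣ A.1 k j := even_off hA hkj
      set C0 : SLZ n := Tv k j hkj (2 * (-c)) with hC0
      have hC0H : C0 ∈ H z := Tv2_mem z k j hkj (-c)
      have hC0G : C0 ∈ Gamma 2 n := Tv2_Gamma k j hkj (-c)
      have hnewBlk : Blk k.val (A * C0 : SLZ n).1 :=
        Blk_col_op hBlk hkj (2 * (-c)) le_rfl (le_of_lt hjval)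
      have hzero : (A * C0 : SLZ n).1 k j = 0 := by
        rw [hC0, col_op_same hkj (2 * (-c)) A k, hpiv, hc]; ring
      have hcolsame : ∀ s, s ≠ j → ∀ r, (A * C0 : SLZ n).1 r s = A.1 r s := by
        intro s hs r
        rw [hC0, col_op_ne hkj (2 * (-c)) A r hs]
      have hothcol : ∀ r, r ≠ k → (A * C0 : SLZ n).1 r j = A.1 r j + (2 * (-c)) * A.1 r k := by
        intro r _
        rw [hC0, col_op_same hkj (2 * (-c)) A r]
      -- column k of A * C0 is still e_k
      have hcol' : ∀ i, i ≠ k → (A * C0 : SLZ n).1 i k = 0 := by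
        intro i hik
        rw [hcolsame k hkj i]; exact hcol i hik
      have hpiv' : (A * C0 : SLZ n).1 k k = 1 := by
        rw [hcolsame k hkj k]; exact hpiv
      have hsum' : (∑ s, ((A * C0 : SLZ n).1 k s).natAbs) < N := by
        have hlt : (∑ s, ((A * C0 : SLZ n).1 k s).natAbs) < ∑ s, (A.1 k s).natAbs := by
          apply Finset.sum_lt_sum
          · intro s _
            by_cases hs : s = j
            · subst hs; rw [hzero]; omega
            · rw [hcolsame s hs k]
          · exact ⟨j, Finset.mem_univ j, by rw [hzero]; omega⟩
        omega
      obtain ⟨C, hCH, hCG, hC1⟩ := ih (A * C0) (mul_mem hA hC0G) hnewBlk hcol' hpiv' hsum'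
      refine ⟨C0 * C, mul_mem hC0H hCH, mul_mem hC0G hCG, ?_⟩
      rwa [← mul_assoc]

lemma Blk_all {k : ℕ} (hk : n ≤ k) (A : SLZ n) (hBlk : Blk k A.1) : A = 1 := by
  apply Subtype.ext
  ext i j
  rw [hBlk i j (Or.inl (by omega)), Matrix.SpecialLinearGroup.coe_one, Matrix.one_apply]

lemma main_reduce (z : Fin n) :
    ∀ (d : ℕ) (k : ℕ), n ≤ k + d → ∀ A : SLZ n, A ∈ Gamma 2 n → Blk k A.1 → A ∈ H z := by
  intro d
  induction d with
  | zero => intro k hk A _ hBlk; rw [Blk_all (by omega) A hBlk]; exact one_mem _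
  | succ d ih =>
    intro k hk A hA hBlk
    by_cases hkn : k < n
    · set kk : Fin n := ⟨k, hkn⟩ with hkk
      obtain ⟨B, hBH, hBG, hB1, hB2, hB3⟩ :=
        col_reduce z kk ((∑ i, (A.1 i kk).natAbs) + 1) A hA hBlk (by omega)
      obtain ⟨C, hCH, hCG, hC1⟩ :=
        row_reduce z kk ((∑ j, ((B * A : SLZ n).1 kk j).natAbs) + 1) (B * A)
          (mul_mem hBG hA) hB1 hB2 hB3 (by omega)
      have hmem : B * A * C ∈ H z := ih (k + 1) (by omega) (B * A * C)
        (mul_mem (mul_mem hBG hA) hCG) hC1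
      have hrw : A = B⁻¹ * (B * A * C) * C⁻¹ := by group
      rw [hrw]
      exact mul_mem (mul_mem (inv_mem hBH) hmem) (inv_mem hCH)
    · rw [Blk_all (by omega) A hBlk]; exact one_mem _

end GammaTwo


open GammaTwo

/-- For `n ≥ 2`, `Γ_2(n)` is generated by the `E_{ij} = e_{ij}²` (`i ≠ j`)
together with the `F_{1k} = e_{1k}² e_{k1}^{-2} (e_{k1} e_{1k}² e_{k1}⁻¹)`
(`k ≠ 1`), where index `1` is the index `⟨0, _⟩ : Fin n`. -/
theorem gamma_two_eq_closure (n : ℕ) (hn : 2 ≤ n) :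
    Gamma 2 n =
      Subgroup.closure
        ({x : SLZ n | ∃ i j : Fin n, i ≠ j ∧ x = (E i j) ^ 2} ∪
         {x : SLZ n | ∃ k : Fin n, k ≠ ⟨0, by omega⟩ ∧
            x = (E (⟨0, by omega⟩ : Fin n) k) ^ 2 * ((E k ⟨0, by omega⟩) ^ 2)⁻¹ *
              (E k ⟨0, by omega⟩ * (E (⟨0, by omega⟩ : Fin n) k) ^ 2 *
                (E k ⟨0, by omega⟩)⁻¹)}) := by
  have h0 : 0 < n := by omega
  set z : Fin n := ⟨0, h0⟩ with hzdef
  apply le_antisymm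
  · intro A hA
    exact main_reduce z n 0 (by omega) A hA
      (fun i j hij => by rcases hij with h | h <;> omega)
  · apply (Subgroup.closure_le _).2
    rintro x hx
    rcases hx with ⟨i, j, hij, rfl⟩ | ⟨k, hk, rfl⟩
    · have hE : (E i j) ^ 2 = Tv i j hij (2 * 1) := by
        rw [E_eq i j hij, pow_two, Tv_mul]; norm_num
      rw [SetLike.mem_coe, hE]
      exact Tv2_Gamma i j hij 1
    · rw [SetLike.mem_coe, F_eq_Dm z k hk]
      exact Dm_Gamma z k hk.symm
end

section
/- For all integers l ≥ 1, m ≥ 1 and n ≥ 3, the product Γ_l(n) · Γ_m(n) = { XY : X ∈ Γ_l(n), Y ∈ Γ_m(n) } is equal to Γ_{gcd(l,m)}(n); equivalently, the join (subgroup generated by the union) of the subgroups Γ_l(n) and Γ_m(n) of SL(n,ℤ) is Γ_{gcd(l,m)}(n). -/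
open Matrix Pointwise

namespace GammaAux


/-- `A` is liftable mod `N`: there is an integer matrix of determinant 1
congruent to `A` entrywise mod `N`. -/
def LiftP (N : ℕ) {ι : Type} [Fintype ι] [DecidableEq ι] (A : Matrix ι ι ℤ) : Prop :=
  ∃ X : Matrix ι ι ℤ, X.det = 1 ∧ X.map (Int.cast : ℤ → ZMod N) = A.map Int.cast

variable {N : ℕ} {ι : Type} [Fintype ι] [DecidableEq ι]

omit [Fintype ι] [DecidableEq ι] in
lemma map_eq_map_of_dvd {κ' : Type*} {A B : Matrix ι κ' ℤ} (h : ∀ i j, (N : ℤ) ∣ A i j - B i j) :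
    A.map (Int.cast : ℤ → ZMod N) = B.map Int.cast := by
  ext i j
  simp only [Matrix.map_apply]
  rw [ZMod.intCast_eq_intCast_iff]
  exact Int.modEq_iff_dvd.2 (by rw [← neg_sub]; exact dvd_neg.2 (h i j))

lemma map_mul_int (A B : Matrix ι ι ℤ) :
    (A * B).map (Int.cast : ℤ → ZMod N) = A.map Int.cast * B.map Int.cast := by
  have := map_mul ((Int.castRingHom (ZMod N)).mapMatrix) A B
  simpa [RingHom.mapMatrix_apply] using this

lemma det_map_int (A : Matrix ι ι ℤ) :
    (A.map (Int.cast : ℤ → ZMod N)).det = ((A.det : ℤ) : ZMod N) := by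
  have := RingHom.map_det (Int.castRingHom (ZMod N)) A
  simpa [RingHom.mapMatrix_apply] using this.symm

lemma liftP_congr {A B : Matrix ι ι ℤ}
    (h : A.map (Int.cast : ℤ → ZMod N) = B.map Int.cast) : LiftP N A ↔ LiftP N B := by
  unfold LiftP; rw [h]

lemma liftP_mul_left {U A : Matrix ι ι ℤ} (hU : U.det = 1) :
    LiftP N (U * A) ↔ LiftP N A := by
  constructor
  · rintro ⟨X, hX1, hX2⟩
    refine ⟨U.adjugate * X, ?_, ?_⟩
    · rw [Matrix.det_mul, Matrix.det_adjugate, hU, hX1, one_pow, one_mul]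
    · rw [map_mul_int, hX2, map_mul_int, ← Matrix.mul_assoc]
      have hadj : (U.adjugate).map (Int.cast : ℤ → ZMod N) =
          (U.map (Int.cast : ℤ → ZMod N)).adjugate := by
        have := RingHom.map_adjugate (Int.castRingHom (ZMod N)) U
        simpa [RingHom.mapMatrix_apply] using this
      rw [hadj, Matrix.adjugate_mul, det_map_int, hU]
      simp
  · rintro ⟨X, hX1, hX2⟩
    exact ⟨U * X, by rw [Matrix.det_mul, hU, hX1, one_mul],
      by rw [map_mul_int, hX2, map_mul_int]⟩

lemma liftP_mul_right {A V : Matrix ι ι ℤ} (hV : V.det = 1) :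
    LiftP N (A * V) ↔ LiftP N A := by
  constructor
  · rintro ⟨X, hX1, hX2⟩
    refine ⟨X * V.adjugate, ?_, ?_⟩
    · rw [Matrix.det_mul, Matrix.det_adjugate, hV, hX1, one_pow, one_mul]
    · rw [map_mul_int, hX2, map_mul_int, Matrix.mul_assoc]
      have hadj : (V.adjugate).map (Int.cast : ℤ → ZMod N) =
          (V.map (Int.cast : ℤ → ZMod N)).adjugate := by
        have := RingHom.map_adjugate (Int.castRingHom (ZMod N)) V
        simpa [RingHom.mapMatrix_apply] using this
      rw [hadj, Matrix.mul_adjugate, det_map_int, hV]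
      simp
  · rintro ⟨X, hX1, hX2⟩
    exact ⟨X * V, by rw [Matrix.det_mul, hX1, hV, one_mul],
      by rw [map_mul_int, hX2, map_mul_int]⟩

lemma liftP_reindex {κ : Type} [Fintype κ] [DecidableEq κ] (e : ι ≃ κ)
    (A : Matrix κ κ ℤ) : LiftP N (A.submatrix e e) ↔ LiftP N A := by
  constructor
  · rintro ⟨X, hX1, hX2⟩
    refine ⟨X.submatrix e.symm e.symm, by rw [Matrix.det_submatrix_equiv_self, hX1], ?_⟩
    have : (X.submatrix e.symm e.symm).map (Int.cast : ℤ → ZMod N)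
        = (X.map (Int.cast : ℤ → ZMod N)).submatrix e.symm e.symm := rfl
    rw [this, hX2]
    ext i j
    simp [Matrix.submatrix_apply]
  · rintro ⟨X, hX1, hX2⟩
    refine ⟨X.submatrix e e, by rw [Matrix.det_submatrix_equiv_self, hX1], ?_⟩
    have : (X.submatrix e e).map (Int.cast : ℤ → ZMod N)
        = (X.map (Int.cast : ℤ → ZMod N)).submatrix e e := rfl
    rw [this, hX2]; rfl

/-- Lemma A: if `x*a + g + z*N = 1` then some `a + t*g` is coprime to `N`. -/
lemma exists_isCoprime_add_mul (hN : N ≠ 0) {a g x z : ℤ} (h : x * a + g + z * N = 1) :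
    ∃ t : ℤ, IsCoprime (a + t * g) (N : ℤ) := by
  classical
  set tn : ℕ := ∏ p ∈ N.primeFactors.filter (fun p : ℕ => ¬ ((p : ℤ) ∣ a)), p with ht
  set t : ℤ := (tn : ℤ) with ht'
  refine ⟨t, ?_⟩
  rw [Int.isCoprime_iff_gcd_eq_one]
  by_contra hg
  obtain ⟨p, hp, hpd⟩ := Nat.exists_prime_and_dvd hg
  have hpa : (p : ℤ) ∣ a + t * g :=
    dvd_trans (Int.natCast_dvd_natCast.2 hpd) (Int.gcd_dvd_left _ _)
  have hpN : (p : ℤ) ∣ (N : ℤ) :=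
    dvd_trans (Int.natCast_dvd_natCast.2 hpd) (Int.gcd_dvd_right _ _)
  have hpNn : p ∣ N := Int.natCast_dvd_natCast.1 hpN
  have hpprime : Prime (p : ℤ) := Nat.prime_iff_prime_int.1 hp
  by_cases hpa' : (p : ℤ) ∣ a
  · -- then p ∤ g and p ∤ t
    have hpg : ¬ (p : ℤ) ∣ g := by
      intro hpg
      have : (p : ℤ) ∣ 1 := by
        rw [← h]
        exact dvd_add (dvd_add (hpa'.mul_left x) hpg) (hpN.mul_left z)
      exact hpprime.not_unit (isUnit_of_dvd_one this)
    have hpt : ¬ (p : ℤ) ∣ t := by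
      rw [ht', ht]
      rw [Int.natCast_dvd_natCast]
      push_cast
      intro hdvd
      obtain ⟨q, hq, hpq⟩ := (Nat.Prime.prime hp).dvd_finset_prod_iff _ |>.1 hdvd
      simp only [Finset.mem_filter, Nat.mem_primeFactors] at hq
      have : p = q := (Nat.prime_dvd_prime_iff_eq hp hq.1.1).1 hpq
      exact hq.2 (this ▸ hpa')
    have : (p : ℤ) ∣ t * g := (dvd_add_right hpa').mp hpa
    rcases hpprime.dvd_mul.1 this with h' | h'
    · exact hpt h'
    · exact hpg h'
  · -- p ∣ t, so p ∣ a
    have hpt : (p : ℤ) ∣ t := by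
      rw [ht', ht]
      rw [Int.natCast_dvd_natCast]
      exact Finset.dvd_prod_of_mem _
        (Finset.mem_filter.2 ⟨Nat.mem_primeFactors.2 ⟨hp, hpNn, hN⟩, hpa'⟩)
    exact hpa' ((dvd_add_right (hpt.mul_right g)).mp (by rwa [add_comm] at hpa))

/-- CRT helper: if `a` is coprime to `N` then any `c` is congruent mod `N`
to a multiple of `a`. -/
lemma exists_dvd_sub {a : ℤ} (ha : IsCoprime a (N : ℤ)) (c : ℤ) :
    ∃ q : ℤ, (N : ℤ) ∣ c - a * q := by
  obtain ⟨u, v, huv⟩ := ha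
  exact ⟨u * c, ⟨v * c, by linear_combination (-c) * huv⟩⟩



variable {N : ℕ} {ι : Type} [Fintype ι] [DecidableEq ι]

/-- explicit 2×2 lift of `diag (a, b)` when `a*b ≡ 1 mod N`. -/
lemma base2 (a b e : ℤ) (he : a * b - 1 = e * N) :
    ∃ X : Matrix (Fin 2) (Fin 2) ℤ, X.det = 1 ∧
      X.map (Int.cast : ℤ → ZMod N) = (Matrix.of ![![a, 0], ![0, b]]).map Int.cast := by
  refine ⟨Matrix.of ![![a, -e^2 * N], ![(N : ℤ), b + (-e * b) * N]], ?_, ?_⟩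
  · rw [Matrix.det_fin_two]
    simp only [Matrix.of_apply, Matrix.cons_val', Matrix.cons_val_zero, Matrix.cons_val_one,
      Matrix.head_cons, Matrix.head_fin_const, Matrix.empty_val', Matrix.cons_val_fin_one]
    linear_combination (1 - e * (N : ℤ)) * he
  · ext i j
    fin_cases i <;> fin_cases j <;>
      simp [Matrix.map_apply] <;> push_cast <;> simp [ZMod.natCast_self]

variable {κ : Type} [Fintype κ] [DecidableEq κ]

lemma rank1_mul_apply (d w : (Fin 1 ⊕ κ) → ℤ) (B : Matrix (Fin 1 ⊕ κ) (Fin 1 ⊕ κ) ℤ)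
    (i j : Fin 1 ⊕ κ) :
    (((1 + replicateCol (Fin 1) d * replicateRow (Fin 1) w : Matrix (Fin 1 ⊕ κ) (Fin 1 ⊕ κ) ℤ)) * B) i j = B i j + d i * ∑ p, w p * B p j := by
  rw [Matrix.add_mul, Matrix.one_mul, Matrix.add_apply, Matrix.mul_assoc]
  congr 1
  rw [Matrix.mul_apply]
  simp [Matrix.mul_apply, Finset.mul_sum]

lemma mul_rank1_apply (d w : (Fin 1 ⊕ κ) → ℤ) (B : Matrix (Fin 1 ⊕ κ) (Fin 1 ⊕ κ) ℤ)
    (i j : Fin 1 ⊕ κ) :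
    (B * ((1 + replicateCol (Fin 1) d * replicateRow (Fin 1) w : Matrix (Fin 1 ⊕ κ) (Fin 1 ⊕ κ) ℤ))) i j = B i j + (∑ p, B i p * d p) * w j := by
  rw [Matrix.mul_add, Matrix.mul_one, Matrix.add_apply, ← Matrix.mul_assoc]
  congr 1
  rw [Matrix.mul_apply]
  simp [Matrix.mul_apply, Finset.sum_mul]

lemma det_rank1_row (w : κ → ℤ) :
    (1 + replicateCol (Fin 1) (Sum.elim 1 0 : Fin 1 ⊕ κ → ℤ)
      * replicateRow (Fin 1) (Sum.elim 0 w : Fin 1 ⊕ κ → ℤ)).det = 1 := by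
  erw [Matrix.det_one_add_replicateCol_mul_replicateRow]
  simp [dotProduct, Fintype.sum_sum_type]

lemma det_rank1_col (v : κ → ℤ) :
    (1 + replicateCol (Fin 1) (Sum.elim 0 v : Fin 1 ⊕ κ → ℤ)
      * replicateRow (Fin 1) (Sum.elim 1 0 : Fin 1 ⊕ κ → ℤ)).det = 1 := by
  erw [Matrix.det_one_add_replicateCol_mul_replicateRow]
  simp [dotProduct, Fintype.sum_sum_type]



lemma liftP_def {N : ℕ} {ι : Type} [Fintype ι] [DecidableEq ι] (A : Matrix ι ι ℤ) :
    LiftP N A ↔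
      ∃ X : Matrix ι ι ℤ, X.det = 1 ∧ X.map (Int.cast : ℤ → ZMod N) = A.map Int.cast :=
  Iff.rfl

lemma reduce (hN : N ≠ 0) {κ : Type} [Fintype κ] [DecidableEq κ]
    (B : Matrix (Fin 1 ⊕ κ) (Fin 1 ⊕ κ) ℤ) (hB : IsCoprime B.det (N : ℤ)) :
    ∃ (a₂ : ℤ) (C : Matrix κ κ ℤ) (U V : Matrix (Fin 1 ⊕ κ) (Fin 1 ⊕ κ) ℤ),
      U.det = 1 ∧ V.det = 1 ∧ IsCoprime a₂ (N : ℤ) ∧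
      (U * B * V).map (Int.cast : ℤ → ZMod N)
        = (fromBlocks (Matrix.of fun _ _ => a₂) 0 0 C).map Int.cast := by
  classical
  obtain ⟨x, z, hxz⟩ := hB
  set u : Fin 1 ⊕ κ := Sum.inl 0 with hu
  -- cofactor expansion of the determinant along column u
  have hdet : B.det = ∑ i, B.adjugate u i * B i u := by
    have h0 := congrFun (congrFun (Matrix.adjugate_mul B) u) u
    simp only [Matrix.mul_apply, Matrix.smul_apply, Matrix.one_apply_eq, smul_eq_mul,
      mul_one] at h0
    exact h0.symm
  have hdet2 : B.det = B.adjugate u u * B u u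
      + ∑ i : κ, B.adjugate u (Sum.inr i) * B (Sum.inr i) u := by
    rw [hdet, Fintype.sum_sum_type]
    simp [hu]
  set a : ℤ := B u u with ha
  set g : ℤ := ∑ i : κ, x * (B.adjugate u (Sum.inr i) * B (Sum.inr i) u) with hg
  have h1 : (x * B.adjugate u u) * a + g + z * N = 1 := by
    rw [hg, ← Finset.mul_sum]
    linear_combination hxz - x * hdet2
  obtain ⟨t, hcop⟩ := exists_isCoprime_add_mul hN h1
  -- Step 1: make the pivot coprime to N
  set wU : (Fin 1 ⊕ κ) → ℤ :=
    Sum.elim 0 (fun i => t * (x * B.adjugate u (Sum.inr i))) with hwU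
  set U₁ : Matrix (Fin 1 ⊕ κ) (Fin 1 ⊕ κ) ℤ :=
    1 + replicateCol (Fin 1) (Sum.elim 1 0 : Fin 1 ⊕ κ → ℤ) * replicateRow (Fin 1) wU with hU₁
  have hU₁det : U₁.det = 1 := det_rank1_row _
  set B₂ : Matrix (Fin 1 ⊕ κ) (Fin 1 ⊕ κ) ℤ := U₁ * B with hB₂
  have hB₂row : ∀ (i : κ) (j : Fin 1 ⊕ κ), B₂ (Sum.inr i) j = B (Sum.inr i) j := by
    intro i j
    rw [hB₂, hU₁, rank1_mul_apply]
    simp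
  have hB₂pivot : B₂ u u = a + t * g := by
    rw [hB₂, hU₁, rank1_mul_apply]
    simp only [hu, Sum.elim_inl, Pi.one_apply, one_mul, Fintype.sum_sum_type]
    rw [hg, Finset.mul_sum]
    simp [hwU, ha, hu, mul_assoc, mul_comm, mul_left_comm]
  rw [← hB₂pivot] at hcop
  -- Step 2: clear the rest of column u mod N
  have hq : ∀ i : κ, ∃ q : ℤ, (N : ℤ) ∣ B₂ (Sum.inr i) u - B₂ u u * q :=
    fun i => exists_dvd_sub hcop _
  choose q hqd using hq
  set vL : (Fin 1 ⊕ κ) → ℤ := Sum.elim 0 (fun i => -(q i)) with hvL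
  set L : Matrix (Fin 1 ⊕ κ) (Fin 1 ⊕ κ) ℤ :=
    1 + replicateCol (Fin 1) vL * replicateRow (Fin 1) (Sum.elim 1 0 : Fin 1 ⊕ κ → ℤ) with hL
  have hLdet : L.det = 1 := det_rank1_col _
  set B₃ : Matrix (Fin 1 ⊕ κ) (Fin 1 ⊕ κ) ℤ := L * B₂ with hB₃
  have hsum1 : ∀ j, (∑ p, (Sum.elim 1 0 : Fin 1 ⊕ κ → ℤ) p * B₂ p j) = B₂ u j := by
    intro j
    rw [Fintype.sum_sum_type]
    simp [hu]
  have hB₃urow : ∀ j, B₃ u j = B₂ u j := by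
    intro j
    rw [hB₃, hL, rank1_mul_apply, hsum1]
    simp [hvL, hu]
  have hB₃col : ∀ i : κ, (N : ℤ) ∣ B₃ (Sum.inr i) u := by
    intro i
    rw [hB₃, hL, rank1_mul_apply, hsum1]
    simpa [hvL, mul_comm, sub_eq_add_neg] using hqd i
  -- Step 3: clear the rest of row u mod N
  have hpivot3 : B₃ u u = B₂ u u := hB₃urow u
  have hq' : ∀ j : κ, ∃ q : ℤ, (N : ℤ) ∣ B₃ u (Sum.inr j) - B₂ u u * q :=
    fun j => exists_dvd_sub hcop _
  choose q' hq'd using hq'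
  set vR : (Fin 1 ⊕ κ) → ℤ := Sum.elim 0 (fun j => -(q' j)) with hvR
  set R : Matrix (Fin 1 ⊕ κ) (Fin 1 ⊕ κ) ℤ :=
    1 + replicateCol (Fin 1) (Sum.elim 1 0 : Fin 1 ⊕ κ → ℤ) * replicateRow (Fin 1) vR with hR
  have hRdet : R.det = 1 := det_rank1_row _
  set B₄ : Matrix (Fin 1 ⊕ κ) (Fin 1 ⊕ κ) ℤ := B₃ * R with hB₄
  have hsum2 : ∀ i, (∑ p, B₃ i p * (Sum.elim 1 0 : Fin 1 ⊕ κ → ℤ) p) = B₃ i u := by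
    intro i
    rw [Fintype.sum_sum_type]
    simp [hu]
  have hB₄ucol : ∀ i, B₄ i u = B₃ i u := by
    intro i
    rw [hB₄, hR, mul_rank1_apply, hsum2]
    simp [hvR, hu]
  have hB₄pivot : B₄ u u = B₂ u u := by rw [hB₄ucol, hpivot3]
  have hB₄urow : ∀ j : κ, (N : ℤ) ∣ B₄ u (Sum.inr j) := by
    intro j
    rw [hB₄, hR, mul_rank1_apply, hsum2, hpivot3]
    simpa [hvR, mul_comm, sub_eq_add_neg] using hq'd j
  have hB₄col : ∀ i : κ, (N : ℤ) ∣ B₄ (Sum.inr i) u := by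
    intro i
    rw [hB₄ucol]
    exact hB₃col i
  -- assemble
  refine ⟨B₂ u u, Matrix.of (fun i j => B₄ (Sum.inr i) (Sum.inr j)), L * U₁, R,
    by rw [Matrix.det_mul, hLdet, hU₁det, one_mul], hRdet, hcop, ?_⟩
  have hmul : L * U₁ * B * R = B₄ := by
    rw [hB₄, hB₃, hB₂, Matrix.mul_assoc L U₁ B]
  rw [hmul]
  have hone : ∀ i : Fin 1, (Sum.inl i : Fin 1 ⊕ κ) = u := by
    intro i
    rw [hu]
    congr
    exact Subsingleton.elim _ _
  ext i j
  rcases i with i | i <;> rcases j with j | j <;>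
    simp only [Matrix.map_apply, Matrix.fromBlocks_apply₁₁, Matrix.fromBlocks_apply₁₂,
      Matrix.fromBlocks_apply₂₁, Matrix.fromBlocks_apply₂₂, Matrix.of_apply,
      Matrix.zero_apply]
  · rw [hone i, hone j, hB₄pivot]
  · rw [hone i, Int.cast_zero]
    exact (ZMod.intCast_zmod_eq_zero_iff_dvd _ _).2 (hB₄urow j)
  · rw [hone j, Int.cast_zero]
    exact (ZMod.intCast_zmod_eq_zero_iff_dvd _ _).2 (hB₄col i)


/-- the 1×1 integer matrix with entry `x`. -/
def S (x : ℤ) : Matrix (Fin 1) (Fin 1) ℤ := Matrix.of fun _ _ => x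

lemma S_det (x : ℤ) : (S x).det = x := by simp [S, Matrix.det_fin_one]

lemma S_mul (x y : ℤ) : S x * S y = S (x * y) := by
  ext i j
  simp [S, Matrix.mul_apply]

lemma dvd_of_cast_eq {x y : ℤ} (h : ((x : ℤ) : ZMod N) = (y : ZMod N)) :
    (N : ℤ) ∣ y - x := by
  rwa [ZMod.intCast_eq_intCast_iff, Int.modEq_iff_dvd] at h

lemma cast_eq_of_dvd {x y : ℤ} (h : (N : ℤ) ∣ y - x) :
    ((x : ℤ) : ZMod N) = (y : ZMod N) := by
  rw [ZMod.intCast_eq_intCast_iff, Int.modEq_iff_dvd]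
  exact h

/-- Whitehead-style matrix: a det-1 integer matrix over `Fin 1 ⊕ (Fin 1 ⊕ κ)`
congruent mod N to `diag (b, a, 1, …, 1)`, provided `b*a ≡ 1 mod N`. -/
lemma exists_whitehead {κ : Type} [Fintype κ] [DecidableEq κ]
    (b a e : ℤ) (he : b * a - 1 = e * N) :
    ∃ E : Matrix (Fin 1 ⊕ (Fin 1 ⊕ κ)) (Fin 1 ⊕ (Fin 1 ⊕ κ)) ℤ, E.det = 1 ∧
      E.map (Int.cast : ℤ → ZMod N)
        = (fromBlocks (S b) 0 0 (fromBlocks (S a) 0 0 (1 : Matrix κ κ ℤ))).map Int.cast := by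
  obtain ⟨X₂, hX₂det, hX₂⟩ := base2 b a e he
  set e2 : Fin 1 ⊕ Fin 1 ≃ Fin 2 := finSumFinEquiv with he2
  set X' : Matrix (Fin 1 ⊕ Fin 1) (Fin 1 ⊕ Fin 1) ℤ := X₂.submatrix e2 e2 with hX'
  set σ : Fin 1 ⊕ (Fin 1 ⊕ κ) ≃ (Fin 1 ⊕ Fin 1) ⊕ κ := (Equiv.sumAssoc (Fin 1) (Fin 1) κ).symm
    with hσ
  refine ⟨(fromBlocks X' 0 0 (1 : Matrix κ κ ℤ)).submatrix σ σ, ?_, ?_⟩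
  · rw [Matrix.det_submatrix_equiv_self, Matrix.det_fromBlocks_zero₂₁, hX',
      Matrix.det_submatrix_equiv_self, hX₂det, Matrix.det_one, one_mul]
  · have hent : ∀ i j : Fin 2, ((X₂ i j : ℤ) : ZMod N)
        = (((Matrix.of ![![b, 0], ![0, a]]) i j : ℤ) : ZMod N) := by
      intro i j
      exact congrFun (congrFun hX₂ i) j
    have h00 : ((X₂ 0 0 : ℤ) : ZMod N) = ((b : ℤ) : ZMod N) := by simpa using hent 0 0
    have h01 : ((X₂ 0 1 : ℤ) : ZMod N) = ((0 : ℤ) : ZMod N) := by simpa using hent 0 1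
    have h10 : ((X₂ 1 0 : ℤ) : ZMod N) = ((0 : ℤ) : ZMod N) := by simpa using hent 1 0
    have h11 : ((X₂ 1 1 : ℤ) : ZMod N) = ((a : ℤ) : ZMod N) := by simpa using hent 1 1
    have hl : ∀ i : Fin 1, e2 (Sum.inl i) = 0 := by
      intro i
      rw [Subsingleton.elim i 0]
      rfl
    have hr : ∀ i : Fin 1, e2 (Sum.inr i) = 1 := by
      intro i
      rw [Subsingleton.elim i 0]
      rfl
    ext i j
    rcases i with i | i
    · rcases j with j | j
      · simpa [Matrix.submatrix_apply, hσ, Equiv.sumAssoc, hX', hl, S] using h00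
      · rcases j with j | j
        · simpa [Matrix.submatrix_apply, hσ, Equiv.sumAssoc, hX', hl, hr, S] using h01
        · simp [Matrix.submatrix_apply, hσ, Equiv.sumAssoc, hX', hl, hr, S]
    · rcases i with i | i
      · rcases j with j | j
        · simpa [Matrix.submatrix_apply, hσ, Equiv.sumAssoc, hX', hl, hr, S] using h10
        · rcases j with j | j
          · simpa [Matrix.submatrix_apply, hσ, Equiv.sumAssoc, hX', hl, hr, S] using h11
          · simp [Matrix.submatrix_apply, hσ, Equiv.sumAssoc, hX', hl, hr, S]
      · rcases j with j | j
        · simp [Matrix.submatrix_apply, hσ, Equiv.sumAssoc, hX', hl, hr, S]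
        · rcases j with j | j
          · simp [Matrix.submatrix_apply, hσ, Equiv.sumAssoc, hX', hl, hr, S]
          · simp [Matrix.submatrix_apply, hσ, Equiv.sumAssoc, hX', S, Matrix.one_apply]

lemma block_submatrix {κ κ' : Type} [Fintype κ] [DecidableEq κ] [Fintype κ'] [DecidableEq κ']
    (e : κ ≃ κ') (a : ℤ) (B : Matrix κ' κ' ℤ) :
    (fromBlocks (S a) 0 0 B).submatrix
        (Equiv.sumCongr (Equiv.refl (Fin 1)) e) (Equiv.sumCongr (Equiv.refl (Fin 1)) e)
      = fromBlocks (S a) 0 0 (B.submatrix e e) := by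
  ext i j
  rcases i with i | i <;> rcases j with j | j <;> rfl

lemma block_mul_block {κ : Type} [Fintype κ] [DecidableEq κ]
    (a : ℤ) (B U : Matrix κ κ ℤ) :
    fromBlocks (1 : Matrix (Fin 1) (Fin 1) ℤ) 0 0 U * fromBlocks (S a) 0 0 B
      = fromBlocks (S a) 0 0 (U * B) := by
  rw [Matrix.fromBlocks_multiply]
  simp

lemma block_mul_block' {κ : Type} [Fintype κ] [DecidableEq κ]
    (a : ℤ) (B V : Matrix κ κ ℤ) :
    fromBlocks (S a) 0 0 B * fromBlocks (1 : Matrix (Fin 1) (Fin 1) ℤ) 0 0 V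
      = fromBlocks (S a) 0 0 (B * V) := by
  rw [Matrix.fromBlocks_multiply]
  simp

lemma det_block_one {κ : Type} [Fintype κ] [DecidableEq κ] {U : Matrix κ κ ℤ}
    (hU : U.det = 1) :
    (fromBlocks (1 : Matrix (Fin 1) (Fin 1) ℤ) 0 0 U).det = 1 := by
  rw [Matrix.det_fromBlocks_zero₂₁, Matrix.det_one, hU, one_mul]

lemma det_block (a : ℤ) {κ : Type} [Fintype κ] [DecidableEq κ] (B : Matrix κ κ ℤ) :
    (fromBlocks (S a) 0 0 B).det = a * B.det := by
  rw [Matrix.det_fromBlocks_zero₂₁, S_det]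

/-- Main induction: lifting for bordered matrices `diag(a) ⊕ B`. -/
lemma main_induction (hN : N ≠ 0) :
    ∀ (k : ℕ) (a b : ℤ), ((a * b : ℤ) : ZMod N) = 1 →
      ∀ B : Matrix (Fin (k+1)) (Fin (k+1)) ℤ, ((B.det : ℤ) : ZMod N) = ((b : ℤ) : ZMod N) →
      LiftP N (fromBlocks (S a) 0 0 B) := by
  intro k
  induction k with
  | zero =>
    intro a b hab B hB
    have h1ab : ((1:ℤ) : ZMod N) = ((a * b : ℤ) : ZMod N) := by rw [hab, Int.cast_one]
    obtain ⟨e, he⟩ := dvd_of_cast_eq (N := N) h1ab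
    obtain ⟨X₂, hdet, hmap⟩ := base2 a b e (by linarith)
    set e2 : Fin 1 ⊕ Fin 1 ≃ Fin 2 := finSumFinEquiv with he2
    rw [liftP_def]
    refine ⟨X₂.submatrix e2 e2, by rw [Matrix.det_submatrix_equiv_self, hdet], ?_⟩
    have hent : ∀ i j : Fin 2, ((X₂ i j : ℤ) : ZMod N)
        = (((Matrix.of ![![a, 0], ![0, b]]) i j : ℤ) : ZMod N) :=
      fun i j => congrFun (congrFun hmap i) j
    have hBb : ((B 0 0 : ℤ) : ZMod N) = ((b : ℤ) : ZMod N) := by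
      rw [← Matrix.det_fin_one B]
      exact hB
    have hl : ∀ i : Fin 1, e2 (Sum.inl i) = 0 := by
      intro i
      rw [Subsingleton.elim i 0]
      rfl
    have hr : ∀ i : Fin 1, e2 (Sum.inr i) = 1 := by
      intro i
      rw [Subsingleton.elim i 0]
      rfl
    ext i j
    rcases i with i | i <;> rcases j with j | j
    · simpa [Matrix.submatrix_apply, hl, S] using hent 0 0
    · simpa [Matrix.submatrix_apply, hl, hr] using hent 0 1
    · simpa [Matrix.submatrix_apply, hl, hr] using hent 1 0
    · rw [Subsingleton.elim (α := Fin 1) i 0, Subsingleton.elim (α := Fin 1) j 0]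
      simp only [Matrix.map_apply, Matrix.submatrix_apply, hr,
        Matrix.fromBlocks_apply₂₂]
      rw [hBb]
      simpa using hent 1 1
  | succ k ih =>
    intro a b hab B hB
    -- coprimality of det B with N
    have habB : ((a * B.det : ℤ) : ZMod N) = 1 := by
      push_cast at hab hB ⊢
      rw [hB, hab]
    have h1B : ((1:ℤ) : ZMod N) = ((a * B.det : ℤ) : ZMod N) := by rw [habB, Int.cast_one]
    obtain ⟨c, hc⟩ := dvd_of_cast_eq (N := N) h1B
    have hcopB : IsCoprime B.det (N : ℤ) := ⟨a, -c, by linarith⟩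
    -- reindex B to Fin 1 ⊕ Fin (k+1)
    set e : Fin 1 ⊕ Fin (k+1) ≃ Fin (k+2) := finSumFinEquiv.trans (finCongr (by omega)) with hee
    set B' : Matrix (Fin 1 ⊕ Fin (k+1)) (Fin 1 ⊕ Fin (k+1)) ℤ := B.submatrix e e with hB'
    have hdetB' : B'.det = B.det := Matrix.det_submatrix_equiv_self e B
    have hcopB' : IsCoprime B'.det (N : ℤ) := hdetB' ▸ hcopB
    obtain ⟨a₂, C, U, V, hU, hV, hcopa₂, hred₀⟩ := reduce hN B' hcopB'
    have hred : (U * B' * V).map (Int.cast : ℤ → ZMod N)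
        = (fromBlocks (S a₂) 0 0 C).map Int.cast := hred₀
    -- determinant bookkeeping
    have hdetUV : (U * B' * V).det = B.det := by
      rw [Matrix.det_mul, Matrix.det_mul, hU, hV, one_mul, mul_one, hdetB']
    have hdets : ((B.det : ℤ) : ZMod N) = ((a₂ * C.det : ℤ) : ZMod N) := by
      have h1 := congrArg Matrix.det hred
      rw [det_map_int, det_map_int, hdetUV, det_block] at h1
      exact h1
    -- apply IH to the inner block
    have hib : ((a * a₂ * C.det : ℤ) : ZMod N) = 1 := by
      push_cast at hab hB hdets ⊢
      rw [mul_assoc, ← hdets, hB, hab]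
    have hIH := ih (a * a₂) C.det hib C rfl
    rw [liftP_def] at hIH
    obtain ⟨X₁, hX₁det, hX₁⟩ := hIH
    -- Whitehead matrix for the pair (b, a)
    have hba : ((b * a : ℤ) : ZMod N) = 1 := by rw [mul_comm]; exact hab
    have h1ba : ((1:ℤ) : ZMod N) = ((b * a : ℤ) : ZMod N) := by rw [hba, Int.cast_one]
    obtain ⟨e', he'⟩ := dvd_of_cast_eq (N := N) h1ba
    obtain ⟨E, hEdet, hE⟩ := exists_whitehead (κ := Fin (k+1)) b a e' (by linarith)
    -- chain of equivalences
    have step1 : LiftP N (fromBlocks (S a) 0 0 B)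
        ↔ LiftP N (fromBlocks (S a) 0 0 B') := by
      rw [← liftP_reindex (Equiv.sumCongr (Equiv.refl (Fin 1)) e) (fromBlocks (S a) 0 0 B),
        block_submatrix]
    have step2 : LiftP N (fromBlocks (S a) 0 0 B')
        ↔ LiftP N (fromBlocks (S a) 0 0 (U * B' * V)) := by
      rw [← block_mul_block' a (U * B') V, ← block_mul_block a B' U,
        liftP_mul_right (det_block_one hV), liftP_mul_left (det_block_one hU)]
    have step3 : LiftP N (fromBlocks (S a) 0 0 (U * B' * V))
        ↔ LiftP N (fromBlocks (S a) 0 0 (fromBlocks (S a₂) 0 0 C)) := by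
      apply liftP_congr
      rw [Matrix.fromBlocks_map, Matrix.fromBlocks_map, hred]
    set M₃ : Matrix (Fin 1 ⊕ (Fin 1 ⊕ Fin (k+1))) (Fin 1 ⊕ (Fin 1 ⊕ Fin (k+1))) ℤ :=
      fromBlocks (S a) 0 0 (fromBlocks (S a₂) 0 0 C) with hM₃
    have step4 : LiftP N M₃ ↔ LiftP N (E * M₃) := (liftP_mul_left hEdet).symm
    -- compute E * M₃ mod N
    have hEM : (E * M₃).map (Int.cast : ℤ → ZMod N)
        = (fromBlocks (S 1) 0 0 X₁).map Int.cast := by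
      rw [map_mul_int, hE, ← map_mul_int]
      have hprod : fromBlocks (S b) 0 0 (fromBlocks (S a) 0 0 (1 : Matrix (Fin (k+1)) (Fin (k+1)) ℤ)) * M₃
          = fromBlocks (S (b*a)) 0 0 (fromBlocks (S (a*a₂)) 0 0 C) := by
        rw [hM₃, Matrix.fromBlocks_multiply, Matrix.fromBlocks_multiply]
        simp [S_mul]
      rw [hprod, Matrix.fromBlocks_map, Matrix.fromBlocks_map]
      have hpiv : (S (b*a)).map (Int.cast : ℤ → ZMod N) = (S 1).map Int.cast := by
        apply map_eq_map_of_dvd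
        intro i j
        simpa [S] using (Dvd.intro e' (by linarith) : (N:ℤ) ∣ b * a - 1)
      rw [hpiv, ← Matrix.fromBlocks_map (S (a * a₂)) 0 0 C (Int.cast : ℤ → ZMod N), ← hX₁,
        ← Matrix.fromBlocks_map]
    have hlast : LiftP N (E * M₃) := by
      rw [liftP_def]
      exact ⟨fromBlocks (S 1) 0 0 X₁,
        by rw [Matrix.det_fromBlocks_zero₂₁, S_det, hX₁det, one_mul], hEM.symm⟩
    exact step1.mpr (step2.mpr (step3.mpr (step4.mpr hlast)))

/-- Every integer matrix with determinant ≡ 1 mod N is congruent mod N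
to a matrix of determinant 1. -/
lemma liftP_of_det_cast (hN : N ≠ 0) {n : ℕ} (A : Matrix (Fin n) (Fin n) ℤ)
    (hA : ((A.det : ℤ) : ZMod N) = 1) : LiftP N A := by
  match n with
  | 0 =>
    rw [liftP_def]
    exact ⟨1, Matrix.det_one, by ext i j; exact i.elim0⟩
  | 1 =>
    rw [liftP_def]
    refine ⟨1, Matrix.det_one, ?_⟩
    ext i j
    rw [Subsingleton.elim i 0, Subsingleton.elim j 0]
    have hone : ((A 0 0 : ℤ) : ZMod N) = ((1 : ℤ) : ZMod N) := by
      rw [← Matrix.det_fin_one A, hA, Int.cast_one]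
    simp [Matrix.map_apply, Matrix.one_apply, hone]
  | (k+2) =>
    have h1A : ((1:ℤ) : ZMod N) = ((A.det : ℤ) : ZMod N) := by rw [hA, Int.cast_one]
    obtain ⟨c, hc⟩ := dvd_of_cast_eq (N := N) h1A
    have hcop : IsCoprime A.det (N : ℤ) := ⟨1, -c, by linarith⟩
    set e : Fin 1 ⊕ Fin (k+1) ≃ Fin (k+2) := finSumFinEquiv.trans (finCongr (by omega)) with hee
    set A' : Matrix (Fin 1 ⊕ Fin (k+1)) (Fin 1 ⊕ Fin (k+1)) ℤ := A.submatrix e e with hA'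
    have hdetA' : A'.det = A.det := Matrix.det_submatrix_equiv_self e A
    have hcop' : IsCoprime A'.det (N : ℤ) := hdetA' ▸ hcop
    obtain ⟨a₂, C, U, V, hU, hV, hcopa₂, hred₀⟩ := reduce hN A' hcop'
    have hred : (U * A' * V).map (Int.cast : ℤ → ZMod N)
        = (fromBlocks (S a₂) 0 0 C).map Int.cast := hred₀
    have hdetUV : (U * A' * V).det = A.det := by
      rw [Matrix.det_mul, Matrix.det_mul, hU, hV, one_mul, mul_one, hdetA']
    have hdets : ((A.det : ℤ) : ZMod N) = ((a₂ * C.det : ℤ) : ZMod N) := by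
      have h1 := congrArg Matrix.det hred
      rw [det_map_int, det_map_int, hdetUV, det_block] at h1
      exact h1
    have hm : ((a₂ * C.det : ℤ) : ZMod N) = 1 := by rw [← hdets, hA]
    have hblock := main_induction hN k a₂ C.det hm C rfl
    have h2 : LiftP N (U * A' * V) := (liftP_congr hred).mpr hblock
    have h3 : LiftP N A' := (liftP_mul_left hU).mp ((liftP_mul_right hV).mp h2)
    exact (liftP_reindex e A).mp h3


lemma map_eq_iff_dvd {N : ℕ} {ι κ : Type} {A B : Matrix ι κ ℤ} :
    A.map (Int.cast : ℤ → ZMod N) = B.map Int.cast ↔ ∀ i j, (N : ℤ) ∣ A i j - B i j := by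
  constructor
  · intro h i j
    have h' := congrFun (congrFun h i) j
    exact dvd_sub_comm.mp (dvd_of_cast_eq h')
  · exact map_eq_map_of_dvd

/-- integer CRT for two (not necessarily coprime) moduli. -/
lemma int_crt (l m : ℕ) (r s : ℤ) (h : ((Nat.gcd l m : ℕ) : ℤ) ∣ r - s) :
    ∃ x : ℤ, (l : ℤ) ∣ x - r ∧ (m : ℤ) ∣ x - s := by
  obtain ⟨q, hq⟩ := h
  have hbez : ((Nat.gcd l m : ℕ) : ℤ) = l * Int.gcdA l m + m * Int.gcdB l m := by
    have := Int.gcd_eq_gcd_ab (l : ℤ) (m : ℤ)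
    rwa [Int.gcd_natCast_natCast] at this
  refine ⟨r - l * Int.gcdA l m * q, ⟨-(Int.gcdA l m * q), by ring⟩,
    ⟨Int.gcdB l m * q, by linear_combination hq + q * hbez⟩⟩

lemma mem_Gamma_iff {d n : ℕ} (A : SLZ n) :
    A ∈ Gamma d n ↔ ∀ i j, (d : ℤ) ∣
      ((A : Matrix (Fin n) (Fin n) ℤ) i j - (1 : Matrix (Fin n) (Fin n) ℤ) i j) := by
  rw [Gamma, MonoidHom.mem_ker]
  refine Iff.trans Subtype.ext_iff ?_
  have hcoe : ((Matrix.SpecialLinearGroup.map (n := Fin n) (Int.castRingHom (ZMod d)) A :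
      Matrix.SpecialLinearGroup (Fin n) (ZMod d)) : Matrix (Fin n) (Fin n) (ZMod d))
      = (A : Matrix (Fin n) (Fin n) ℤ).map (Int.cast : ℤ → ZMod d) := by
    rfl
  rw [hcoe, Matrix.SpecialLinearGroup.coe_one,
    show (1 : Matrix (Fin n) (Fin n) (ZMod d))
      = (1 : Matrix (Fin n) (Fin n) ℤ).map (Int.cast : ℤ → ZMod d) from
        (Matrix.map_one _ Int.cast_zero Int.cast_one).symm]
  exact map_eq_iff_dvd

/-- The key decomposition: any element of `Γ_{gcd l m}` is a product of an
element of `Γ_l` and an element of `Γ_m`. -/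
lemma key {l m n : ℕ} (hl : 1 ≤ l) (hm : 1 ≤ m) (A : SLZ n)
    (hA : A ∈ Gamma (Nat.gcd l m) n) :
    ∃ X ∈ Gamma l n, ∃ Y ∈ Gamma m n, X * Y = A := by
  classical
  have hAd := (mem_Gamma_iff A).mp hA
  -- build M with M ≡ 1 mod l, M ≡ A mod m
  have hM : ∀ i j : Fin n, ∃ x : ℤ,
      (l : ℤ) ∣ x - (1 : Matrix (Fin n) (Fin n) ℤ) i j ∧
      (m : ℤ) ∣ x - (A : Matrix (Fin n) (Fin n) ℤ) i j := by
    intro i j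
    exact int_crt l m _ _ (dvd_sub_comm.mp (hAd i j))
  choose M hMl hMm using hM
  set Mm : Matrix (Fin n) (Fin n) ℤ := Matrix.of M with hMm'
  have hl' : (Mm).map (Int.cast : ℤ → ZMod l) = (1 : Matrix (Fin n) (Fin n) ℤ).map Int.cast :=
    map_eq_iff_dvd.mpr fun i j => hMl i j
  have hm' : (Mm).map (Int.cast : ℤ → ZMod m) =
      ((A : Matrix (Fin n) (Fin n) ℤ)).map Int.cast :=
    map_eq_iff_dvd.mpr fun i j => hMm i j
  set N : ℕ := Nat.lcm l m with hNdef
  have hN : N ≠ 0 := Nat.lcm_ne_zero (by omega) (by omega)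
  -- det Mm ≡ 1 mod N
  have hdl : (l : ℤ) ∣ Mm.det - 1 := by
    have := congrArg Matrix.det hl'
    rw [det_map_int, det_map_int, Matrix.det_one] at this
    have h2 := dvd_of_cast_eq (x := Mm.det) (y := 1) this
    exact dvd_sub_comm.mp h2
  have hdm : (m : ℤ) ∣ Mm.det - 1 := by
    have := congrArg Matrix.det hm'
    rw [det_map_int, det_map_int, A.prop] at this
    have h2 := dvd_of_cast_eq (x := Mm.det) (y := 1) this
    exact dvd_sub_comm.mp h2
  have hdN : (N : ℤ) ∣ Mm.det - 1 := by
    have h1 : ((Int.lcm (l : ℤ) (m : ℤ) : ℕ) : ℤ) ∣ Mm.det - 1 := Int.natCast_dvd.2 (Int.lcm_dvd (Int.dvd_natAbs.2 hdl) (Int.dvd_natAbs.2 hdm))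
    have h2 : Int.lcm (l : ℤ) (m : ℤ) = N := by
      simp [Int.lcm, hNdef]
    rwa [h2] at h1
  have hdet : ((Mm.det : ℤ) : ZMod N) = 1 := by
    have := cast_eq_of_dvd (x := 1) (y := Mm.det) hdN
    rw [← this, Int.cast_one]
  obtain ⟨X, hXdet, hXmap⟩ := (liftP_def (N := N) Mm).mp (liftP_of_det_cast hN Mm hdet)
  have hXM : ∀ i j, (N : ℤ) ∣ X i j - Mm i j := map_eq_iff_dvd.mp hXmap
  have hlN : (l : ℤ) ∣ (N : ℤ) := Int.natCast_dvd_natCast.2 (Nat.dvd_lcm_left l m)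
  have hmN : (m : ℤ) ∣ (N : ℤ) := Int.natCast_dvd_natCast.2 (Nat.dvd_lcm_right l m)
  set X' : SLZ n := ⟨X, hXdet⟩ with hX'
  have hXl : X' ∈ Gamma l n := by
    rw [mem_Gamma_iff]
    intro i j
    have : X i j - (1 : Matrix (Fin n) (Fin n) ℤ) i j
        = (X i j - Mm i j) + (Mm i j - (1 : Matrix (Fin n) (Fin n) ℤ) i j) := by ring
    rw [show ((X' : Matrix (Fin n) (Fin n) ℤ)) = X from rfl, this]
    exact dvd_add (dvd_trans hlN (hXM i j)) (hMl i j)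
  have hXAm : ∀ i j, (m : ℤ) ∣ X i j - (A : Matrix (Fin n) (Fin n) ℤ) i j := by
    intro i j
    have : X i j - (A : Matrix (Fin n) (Fin n) ℤ) i j
        = (X i j - Mm i j) + (Mm i j - (A : Matrix (Fin n) (Fin n) ℤ) i j) := by ring
    rw [this]
    exact dvd_add (dvd_trans hmN (hXM i j)) (hMm i j)
  refine ⟨X', hXl, X'⁻¹ * A, ?_, by group⟩
  rw [Gamma, MonoidHom.mem_ker, _root_.map_mul, map_inv]
  have hXA : Matrix.SpecialLinearGroup.map (n := Fin n) (Int.castRingHom (ZMod m)) X'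
      = Matrix.SpecialLinearGroup.map (n := Fin n) (Int.castRingHom (ZMod m)) A := by
    apply Subtype.ext
    have h1 : ((Matrix.SpecialLinearGroup.map (n := Fin n) (Int.castRingHom (ZMod m)) X' :
        Matrix.SpecialLinearGroup (Fin n) (ZMod m)) : Matrix (Fin n) (Fin n) (ZMod m))
        = X.map (Int.cast : ℤ → ZMod m) := by
      rfl
    have h2 : ((Matrix.SpecialLinearGroup.map (n := Fin n) (Int.castRingHom (ZMod m)) A :
        Matrix.SpecialLinearGroup (Fin n) (ZMod m)) : Matrix (Fin n) (Fin n) (ZMod m))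
        = ((A : Matrix (Fin n) (Fin n) ℤ)).map (Int.cast : ℤ → ZMod m) := by
      rfl
    rw [h1, h2]
    exact map_eq_iff_dvd.mpr hXAm
  rw [hXA, inv_mul_cancel]

lemma Gamma_le_Gamma {d e n : ℕ} (h : d ∣ e) : Gamma e n ≤ Gamma d n := by
  intro A hA
  rw [mem_Gamma_iff] at hA ⊢
  intro i j
  exact dvd_trans (Int.natCast_dvd_natCast.2 h) (hA i j)


end GammaAux

/-- Lemma 6.1(2): for `l, m ≥ 1` and `n ≥ 3`, the set of products
`Γ_l(n) · Γ_m(n)` equals `Γ_{gcd(l,m)}(n)`; equivalently the join of the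
subgroups `Γ_l(n)` and `Γ_m(n)` is `Γ_{gcd(l,m)}(n)`. -/
theorem gamma_mul (l m n : ℕ) (hl : 1 ≤ l) (hm : 1 ≤ m) (hn : 3 ≤ n) :
    (Gamma l n : Set (SLZ n)) * (Gamma m n : Set (SLZ n)) =
        (Gamma (Nat.gcd l m) n : Set (SLZ n)) ∧
      Gamma l n ⊔ Gamma m n = Gamma (Nat.gcd l m) n := by
  have hle1 : Gamma l n ≤ Gamma (Nat.gcd l m) n := GammaAux.Gamma_le_Gamma (Nat.gcd_dvd_left l m)
  have hle2 : Gamma m n ≤ Gamma (Nat.gcd l m) n := GammaAux.Gamma_le_Gamma (Nat.gcd_dvd_right l m)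
  constructor
  · ext A
    constructor
    · rintro ⟨X, hX, Y, hY, rfl⟩
      exact mul_mem (hle1 hX) (hle2 hY)
    · intro hA
      obtain ⟨X, hX, Y, hY, hXY⟩ := GammaAux.key hl hm A hA
      exact ⟨X, hX, Y, hY, hXY⟩
  · refine le_antisymm (sup_le hle1 hle2) ?_
    intro A hA
    obtain ⟨X, hX, Y, hY, hXY⟩ := GammaAux.key hl hm A hA
    rw [← hXY]
    exact mul_mem (Subgroup.mem_sup_left hX) (Subgroup.mem_sup_right hY)
end

section
/- Let l ≥ 1, m ≥ 1 and n ≥ 3 be integers such that l divides m and m divides l². Then the quotient group Γ_l(n) / Γ_m(n) is isomorphic to (ℤ/(m/l)ℤ)^{n²−1}. -/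
open Matrix

/-- Principal congruence subgroups are normal in `SL(n, ℤ)` (they are kernels). -/
instance gamma_normal (d n : ℕ) : (Gamma d n).Normal :=
  MonoidHom.normal_ker _

/-- Hence `Γ_d(n)` intersected down to any subgroup is normal in that subgroup. -/
instance gamma_subgroupOf_normal (d n : ℕ) (K : Subgroup (SLZ n)) :
    ((Gamma d n).subgroupOf K).Normal :=
  Subgroup.Normal.subgroupOf (gamma_normal d n) K

namespace GammaProofAux

variable {n : ℕ}

lemma mem_gamma_iff {d : ℕ} {A : SLZ n} :
    A ∈ Gamma d n ↔ ∀ i j, (d : ℤ) ∣ (A.1 i j - (1 : Matrix (Fin n) (Fin n) ℤ) i j) := by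
  have h1 : A ∈ Gamma d n ↔
      (A.1).map (Int.cast : ℤ → ZMod d) = (1 : Matrix (Fin n) (Fin n) (ZMod d)) := by
    erw [Gamma, MonoidHom.mem_ker, Subtype.ext_iff,
      Matrix.SpecialLinearGroup.map_apply_coe, RingHom.mapMatrix_apply]
    rfl
  rw [h1, ← Matrix.ext_iff]
  constructor
  · intro h i j
    have := h i j
    rw [Matrix.map_apply] at this
    rw [← ZMod.intCast_zmod_eq_zero_iff_dvd, Int.cast_sub, sub_eq_zero, this]
    simp [Matrix.one_apply, apply_ite (Int.cast : ℤ → ZMod d)]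
  · intro h i j
    have := h i j
    rw [← ZMod.intCast_zmod_eq_zero_iff_dvd, Int.cast_sub, sub_eq_zero] at this
    rw [Matrix.map_apply, this]
    simp [Matrix.one_apply, apply_ite (Int.cast : ℤ → ZMod d)]

/-- The matrix `(A - 1)/l`, entrywise integer division. -/
def bmat (l : ℕ) (A : SLZ n) : Matrix (Fin n) (Fin n) ℤ :=
  Matrix.of fun i j => (A.1 i j - (1 : Matrix (Fin n) (Fin n) ℤ) i j) / (l : ℤ)

lemma bmat_spec {l : ℕ} {A : SLZ n} (hA : A ∈ Gamma l n) (i j : Fin n) :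
    (l : ℤ) * bmat l A i j = A.1 i j - (1 : Matrix (Fin n) (Fin n) ℤ) i j :=
  Int.mul_ediv_cancel' (mem_gamma_iff.mp hA i j)

lemma entry_eq {l : ℕ} {A : SLZ n} (hA : A ∈ Gamma l n) (i j : Fin n) :
    A.1 i j = (1 : Matrix (Fin n) (Fin n) ℤ) i j + (l : ℤ) * bmat l A i j := by
  rw [bmat_spec hA i j]; ring

lemma coe_eq {l : ℕ} {A : SLZ n} (hA : A ∈ Gamma l n) :
    A.1 = 1 + (l : ℤ) • bmat l A := by
  ext i j
  rw [Matrix.add_apply, Matrix.smul_apply, smul_eq_mul, bmat_spec hA i j]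
  ring

lemma bmat_mul {l : ℕ} (hl : (l : ℤ) ≠ 0) {A B : SLZ n}
    (hA : A ∈ Gamma l n) (hB : B ∈ Gamma l n) (i j : Fin n) :
    bmat l (A * B) i j = bmat l A i j + bmat l B i j +
      (l : ℤ) * ∑ k, bmat l A i k * bmat l B k j := by
  have hAB : A * B ∈ Gamma l n := mul_mem hA hB
  apply mul_left_cancel₀ hl
  rw [bmat_spec hAB i j]
  have hco : (A * B).1 = A.1 * B.1 := rfl
  rw [hco, Matrix.mul_apply]
  have : ∀ k, A.1 i k * B.1 k j =
      (1 : Matrix (Fin n) (Fin n) ℤ) i k * (1 : Matrix (Fin n) (Fin n) ℤ) k j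
      + (1 : Matrix (Fin n) (Fin n) ℤ) i k * ((l : ℤ) * bmat l B k j)
      + ((l : ℤ) * bmat l A i k) * (1 : Matrix (Fin n) (Fin n) ℤ) k j
      + ((l : ℤ) * bmat l A i k) * ((l : ℤ) * bmat l B k j) := by
    intro k
    rw [entry_eq hA i k, entry_eq hB k j]
    ring
  rw [Finset.sum_congr rfl fun k _ => this k]
  rw [Finset.sum_add_distrib, Finset.sum_add_distrib, Finset.sum_add_distrib]
  have s1 : ∑ k, (1 : Matrix (Fin n) (Fin n) ℤ) i k * (1 : Matrix (Fin n) (Fin n) ℤ) k j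
      = (1 : Matrix (Fin n) (Fin n) ℤ) i j := by
    simp [Matrix.one_apply, ite_mul]
  have s2 : ∑ k, (1 : Matrix (Fin n) (Fin n) ℤ) i k * ((l : ℤ) * bmat l B k j)
      = (l : ℤ) * bmat l B i j := by
    simp [Matrix.one_apply, ite_mul]
  have s3 : ∑ k, ((l : ℤ) * bmat l A i k) * (1 : Matrix (Fin n) (Fin n) ℤ) k j
      = (l : ℤ) * bmat l A i j := by
    simp [Matrix.one_apply, mul_ite]
  rw [s1, s2, s3, Finset.mul_sum]
  have : ∀ k, ((l : ℤ) * bmat l A i k) * ((l : ℤ) * bmat l B k j)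
      = (l : ℤ) * ((l:ℤ) * (bmat l A i k * bmat l B k j)) := fun k => by ring
  rw [Finset.sum_congr rfl fun k _ => this k, ← Finset.mul_sum, ← Finset.mul_sum]
  ring

lemma trace_dvd {l q : ℕ} (hl : (l : ℤ) ≠ 0) (hq : (q : ℤ) ∣ (l : ℤ)) {A : SLZ n}
    (hA : A ∈ Gamma l n) : (q : ℤ) ∣ Matrix.trace (bmat l A) := by
  have hdet : Matrix.det (1 + (l : ℤ) • bmat l A) = 1 := by
    rw [← coe_eq hA]; exact A.2
  rw [Matrix.det_one_add_smul] at hdet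
  set c := (Matrix.det (1 + (Polynomial.X : Polynomial ℤ) •
    (bmat l A).map Polynomial.C)).divX.divX.eval (l : ℤ) with hc
  have h2 : Matrix.trace (bmat l A) * (l : ℤ) = (-c * (l:ℤ)) * (l : ℤ) := by
    have : Matrix.trace (bmat l A) * (l : ℤ) + c * (l : ℤ) ^ 2 = 0 := by linarith
    nlinarith [this]
  have h3 : Matrix.trace (bmat l A) = -c * (l : ℤ) := mul_right_cancel₀ hl h2
  rw [h3]
  exact Dvd.dvd.mul_left hq _

/-- Transvection as an element of `SL(n, ℤ)`. -/
def tvSL (i j : Fin n) (h : i ≠ j) (c : ℤ) : SLZ n :=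
  ⟨Matrix.transvection i j c, Matrix.det_transvection_of_ne i j h c⟩

lemma tvSL_sub_one (i j : Fin n) (h : i ≠ j) (c : ℤ) (a b : Fin n) :
    (tvSL i j h c).1 a b - (1 : Matrix (Fin n) (Fin n) ℤ) a b
      = Matrix.single i j c a b := by
  simp [tvSL, Matrix.transvection, Matrix.add_apply]

lemma tvSL_mem (l : ℕ) (i j : Fin n) (h : i ≠ j) :
    tvSL i j h (l : ℤ) ∈ Gamma l n := by
  rw [mem_gamma_iff]
  intro a b
  rw [tvSL_sub_one]
  rw [Matrix.single, Matrix.of_apply]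
  split_ifs
  · exact dvd_rfl
  · exact dvd_zero _

lemma bmat_tvSL {l : ℕ} (hl : (l : ℤ) ≠ 0) (i j : Fin n) (h : i ≠ j) (a b : Fin n) :
    bmat l (tvSL i j h (l : ℤ)) a b = if i = a ∧ j = b then 1 else 0 := by
  rw [bmat, Matrix.of_apply, tvSL_sub_one, Matrix.single, Matrix.of_apply]
  split_ifs
  · exact Int.ediv_self hl
  · exact Int.zero_ediv _

/-- The diagonal generator: a product of three transvections whose matrix is
`1 + l•(E_pp - E_LL - E_pL + E_Lp)`. -/
def dg (l : ℕ) (p L : Fin n) (h : p ≠ L) : SLZ n :=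
  tvSL p L h 1 * tvSL L p h.symm (l : ℤ) * tvSL p L h (-1)

lemma dg_coe (l : ℕ) (p L : Fin n) (h : p ≠ L) :
    (dg l p L h).1 = 1 + Matrix.single p p (l : ℤ)
      + Matrix.single L L (-(l : ℤ))
      + Matrix.single p L (-(l : ℤ)) + Matrix.single L p (l : ℤ) := by
  have hco : (dg l p L h).1
      = Matrix.transvection p L (1 : ℤ) * Matrix.transvection L p (l : ℤ)
        * Matrix.transvection p L (-1 : ℤ) := rfl
  rw [hco]
  set a := Matrix.single p L (1 : ℤ)
  set b := Matrix.single L p (l : ℤ)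
  set c := Matrix.single p L (-1 : ℤ)
  have hab : a * b = Matrix.single p p (l : ℤ) := by
    rw [Matrix.single_mul_single_same]; rw [one_mul]
  have hac : a * c = 0 := Matrix.single_mul_single_of_ne (c := (1 : ℤ)) (i := p) (j := L) (k := p) (Ne.symm h) (-1)
  have hbc : b * c = Matrix.single L L (-(l : ℤ)) := by
    rw [Matrix.single_mul_single_same]; ring_nf
  have habc : a * b * c = Matrix.single p L (-(l : ℤ)) := by
    rw [hab, Matrix.single_mul_single_same]; ring_nf
  have hexp : Matrix.transvection p L (1 : ℤ) * Matrix.transvection L p (l : ℤ)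
      * Matrix.transvection p L (-1 : ℤ)
      = 1 + a + b + c + a * b + a * c + b * c + a * b * c := by
    show (1 + a) * (1 + b) * (1 + c) = _
    noncomm_ring
  rw [hexp, habc, hab, hac, hbc]
  have hcancel : a + c = 0 := by
    rw [show a = Matrix.single p L (1:ℤ) from rfl,
      show c = Matrix.single p L (-1:ℤ) from rfl,
      ← Matrix.single_add]
    norm_num
  have : 1 + a + b + c + Matrix.single p p (l : ℤ) + 0
      + Matrix.single L L (-(l : ℤ)) + Matrix.single p L (-(l : ℤ))
      = 1 + (a + c) + b + Matrix.single p p (l : ℤ)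
      + Matrix.single L L (-(l : ℤ)) + Matrix.single p L (-(l : ℤ)) := by
    abel
  rw [this, hcancel]
  abel

lemma dg_sub_one (l : ℕ) (p L : Fin n) (h : p ≠ L) (a b : Fin n) :
    (dg l p L h).1 a b - (1 : Matrix (Fin n) (Fin n) ℤ) a b
      = (l : ℤ) * (Matrix.single p p (1:ℤ) a b - Matrix.single L L (1:ℤ) a b
        - Matrix.single p L (1:ℤ) a b + Matrix.single L p (1:ℤ) a b) := by
  rw [dg_coe]
  simp only [Matrix.add_apply, Matrix.single, Matrix.of_apply]
  have hpl : ¬(p = L) := h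
  split_ifs <;> simp_all <;> ring

lemma dg_mem (l : ℕ) (p L : Fin n) (h : p ≠ L) : dg l p L h ∈ Gamma l n := by
  rw [mem_gamma_iff]
  intro a b
  exact ⟨_, dg_sub_one l p L h a b⟩

lemma bmat_dg {l : ℕ} (hl : (l : ℤ) ≠ 0) (p L : Fin n) (h : p ≠ L) (a b : Fin n) :
    bmat l (dg l p L h) a b
      = Matrix.single p p (1:ℤ) a b - Matrix.single L L (1:ℤ) a b
        - Matrix.single p L (1:ℤ) a b + Matrix.single L p (1:ℤ) a b := by
  rw [bmat, Matrix.of_apply, dg_sub_one l p L h a b]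
  exact Int.mul_ediv_cancel_left _ hl

end GammaProofAux

/-- Theorem 1.6(3): for `l, m ≥ 1`, `n ≥ 3` with `l ∣ m` and `m ∣ l²`,
`Γ_l(n)/Γ_m(n) ≅ (ℤ/(m/l)ℤ)^{n²-1}`. -/
theorem gamma_quotient_iso_zmod (l m n : ℕ) (hl : 1 ≤ l) (hm : 1 ≤ m) (hn : 3 ≤ n)
    (hlm : l ∣ m) (hml : m ∣ l ^ 2) :
    Nonempty
      ((Gamma l n ⧸ (Gamma m n).subgroupOf (Gamma l n)) ≃*
        Multiplicative (Fin (n ^ 2 - 1) → ZMod (m / l))) := by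
  classical
  open GammaProofAux in
  set q := m / l with hqdef
  have hl0 : (l : ℤ) ≠ 0 := Int.natCast_ne_zero.mpr (by omega)
  have hmlq : m = l * q := (Nat.mul_div_cancel' hlm).symm
  have hq0 : q ≠ 0 := by
    rintro h
    rw [h, mul_zero] at hmlq
    omega
  haveI : NeZero q := ⟨hq0⟩
  have hql : (q : ℤ) ∣ (l : ℤ) := by
    have : (l : ℕ) * q ∣ l * l := by
      rw [← hmlq]; simpa [pow_two] using hml
    exact_mod_cast (mul_dvd_mul_iff_left (by omega : l ≠ 0)).mp this
  have hqlnat : q ∣ l := by exact_mod_cast hql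
  have hlcast : ((l : ℕ) : ZMod q) = 0 := (ZMod.natCast_eq_zero_iff _ _).mpr hqlnat
  -- the distinguished index
  have hn0 : 0 < n := by omega
  let L : Fin n := ⟨n - 1, by omega⟩
  let P := {pos : Fin n × Fin n // pos ≠ (L, L)}
  -- the reduction homomorphism
  let g : ↥(Gamma l n) →* Multiplicative (P → ZMod q) :=
    { toFun := fun A => Multiplicative.ofAdd
        (fun pos => ((bmat l A.1 pos.1.1 pos.1.2 : ℤ) : ZMod q))
      map_one' := by
        have h0 : ∀ i j : Fin n, bmat l ((1 : ↥(Gamma l n)) : SLZ n) i j = 0 := by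
          intro i j
          simp [bmat]
        funext pos
        show ((bmat l ((1 : ↥(Gamma l n)) : SLZ n) pos.1.1 pos.1.2 : ℤ) : ZMod q) = 0
        rw [h0]
        simp
      map_mul' := by
        intro A B
        have hco : ((A * B : ↥(Gamma l n)) : SLZ n) = (A : SLZ n) * (B : SLZ n) := rfl
        funext pos
        show ((bmat l ((A * B : ↥(Gamma l n)) : SLZ n) pos.1.1 pos.1.2 : ℤ) : ZMod q)
          = ((bmat l (A : SLZ n) pos.1.1 pos.1.2 : ℤ) : ZMod q)
            + ((bmat l (B : SLZ n) pos.1.1 pos.1.2 : ℤ) : ZMod q)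
        rw [hco, bmat_mul hl0 A.2 B.2]
        push_cast
        rw [hlcast]
        ring }
  have hg_apply : ∀ (A : ↥(Gamma l n)) (pos : P),
      (Multiplicative.toAdd (g A)) pos = ((bmat l A.1 pos.1.1 pos.1.2 : ℤ) : ZMod q) :=
    fun A pos => rfl
  -- kernel computation
  have hker : g.ker = (Gamma m n).subgroupOf (Gamma l n) := by
    ext A
    rw [MonoidHom.mem_ker, Subgroup.mem_subgroupOf]
    have hchar : (∀ i j : Fin n, ((bmat l A.1 i j : ℤ) : ZMod q) = 0) ↔ (A : SLZ n) ∈ Gamma m n := by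
      constructor
      · intro h
        rw [mem_gamma_iff]
        intro i j
        have h1 : (q : ℤ) ∣ bmat l A.1 i j := by
          rw [← ZMod.intCast_zmod_eq_zero_iff_dvd]
          exact_mod_cast h i j
        have h2 : ((l : ℤ) * q) ∣ (l : ℤ) * bmat l A.1 i j :=
          mul_dvd_mul_left _ h1
        rw [bmat_spec A.2 i j] at h2
        have : ((m : ℕ) : ℤ) = (l : ℤ) * q := by exact_mod_cast hmlq
        rwa [this]
      · intro h i j
        rw [ZMod.intCast_zmod_eq_zero_iff_dvd]
        have h1 := mem_gamma_iff.mp h i j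
        have : ((l : ℤ) * q) ∣ ((A : SLZ n).1 i j - (1 : Matrix (Fin n) (Fin n) ℤ) i j) := by
          have : ((m : ℕ) : ℤ) = (l : ℤ) * q := by exact_mod_cast hmlq
          rwa [this] at h1
        rw [← bmat_spec A.2 i j] at this
        exact (mul_dvd_mul_iff_left hl0).mp this
    constructor
    · intro h
      rw [← hchar]
      intro i j
      by_cases hij : ((i, j) : Fin n × Fin n) = (L, L)
      · -- use the trace
        have htr : ((Matrix.trace (bmat l A.1) : ℤ) : ZMod q) = 0 := by
          rw [ZMod.intCast_zmod_eq_zero_iff_dvd]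
          exact trace_dvd hl0 hql A.2
        have hsum : ∑ k : Fin n, ((bmat l A.1 k k : ℤ) : ZMod q) = 0 := by
          rw [← Int.cast_sum]
          exact htr
        have hoff : ∀ k : Fin n, k ≠ L → ((bmat l A.1 k k : ℤ) : ZMod q) = 0 := by
          intro k hk
          have hpos : ((k, k) : Fin n × Fin n) ≠ (L, L) := by
            simp [Prod.ext_iff, hk]
          have := congrFun (congrArg Multiplicative.toAdd h) ⟨(k, k), hpos⟩
          rw [hg_apply] at this
          exact this
        have hLL : ((bmat l A.1 L L : ℤ) : ZMod q) = 0 := by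
          rw [Finset.sum_eq_single L] at hsum
          · exact hsum
          · intro k _ hk; exact hoff k hk
          · intro hL; exact absurd (Finset.mem_univ L) hL
        have h1 : i = L := congrArg Prod.fst hij
        have h2 : j = L := congrArg Prod.snd hij
        rw [h1, h2]
        exact hLL
      · have := congrFun (congrArg Multiplicative.toAdd h) ⟨(i, j), hij⟩
        rw [hg_apply] at this
        exact this
    · intro h
      have := hchar.mpr h
      funext pos
      show (Multiplicative.toAdd (g A)) pos = 0
      rw [hg_apply]
      exact this pos.1.1 pos.1.2
  -- surjectivity
  let W : AddSubgroup (P → ZMod q) := Subgroup.toAddSubgroup' g.range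
  have hWmem : ∀ v : P → ZMod q, v ∈ W ↔ ∃ A, g A = Multiplicative.ofAdd v := by
    intro v
    rfl
  have hoffW : ∀ (i j : Fin n) (hij : i ≠ j) (hne : ((i, j) : Fin n × Fin n) ≠ (L, L)),
      Pi.single (⟨(i, j), hne⟩ : P) (1 : ZMod q) ∈ W := by
    intro i j hij hne
    rw [hWmem]
    refine ⟨⟨tvSL i j hij (l : ℤ), tvSL_mem l i j hij⟩, ?_⟩
    apply Multiplicative.toAdd.injective
    rw [toAdd_ofAdd]
    funext pos
    rw [hg_apply]
    rw [bmat_tvSL hl0 i j hij]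
    rw [Pi.single_apply]
    by_cases hcond : i = pos.1.1 ∧ j = pos.1.2
    · rw [if_pos hcond]
      have : pos = (⟨(i, j), hne⟩ : P) := by
        apply Subtype.ext
        exact Prod.ext hcond.1.symm hcond.2.symm
      rw [if_pos this]
      norm_num
    · rw [if_neg hcond]
      have : pos ≠ (⟨(i, j), hne⟩ : P) := by
        intro hcon
        apply hcond
        have := congrArg Subtype.val hcon
        exact ⟨(congrArg Prod.fst this).symm, (congrArg Prod.snd this).symm⟩
      rw [if_neg this]
      norm_num
  have hsingleW : ∀ pos : P, Pi.single pos (1 : ZMod q) ∈ W := by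
    rintro ⟨⟨i, j⟩, hne⟩
    by_cases hij : i = j
    · -- diagonal, i ≠ L
      subst hij
      have hiL : i ≠ L := by
        intro hcon
        exact hne (by rw [hcon])
      have hposiL : ((i, L) : Fin n × Fin n) ≠ (L, L) := by
        simp [Prod.ext_iff, hiL]
      have hposLi : ((L, i) : Fin n × Fin n) ≠ (L, L) := by
        simp [Prod.ext_iff, hiL]
      -- the dg element
      have hdgW : (fun pos : P =>
          ((bmat l (dg l i L hiL) pos.1.1 pos.1.2 : ℤ) : ZMod q)) ∈ W := by
        rw [hWmem]
        exact ⟨⟨dg l i L hiL, dg_mem l i L hiL⟩, rfl⟩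
      have hval : (fun pos : P =>
          ((bmat l (dg l i L hiL) pos.1.1 pos.1.2 : ℤ) : ZMod q))
          = Pi.single (⟨(i, i), hne⟩ : P) (1 : ZMod q)
            - Pi.single (⟨(i, L), hposiL⟩ : P) (1 : ZMod q)
            + Pi.single (⟨(L, i), hposLi⟩ : P) (1 : ZMod q) := by
        funext pos
        obtain ⟨⟨a, b⟩, hposne⟩ := pos
        have hLLstd : Matrix.single L L (1:ℤ) a b = 0 := by
          rw [Matrix.single, Matrix.of_apply, if_neg]
          rintro ⟨h1, h2⟩
          exact hposne (by rw [← h1, ← h2])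
        rw [show ((⟨(a, b), hposne⟩ : P).1.1) = a from rfl] -- normalize
        rw [bmat_dg hl0 i L hiL a b, hLLstd]
        simp only [Pi.add_apply, Pi.sub_apply, Pi.single_apply,
          Matrix.single, Matrix.of_apply]
        have he1 : ((⟨(a, b), hposne⟩ : P) = (⟨(i, i), hne⟩ : P)) ↔ (i = a ∧ i = b) := by
          constructor
          · intro hcon
            have := congrArg Subtype.val hcon
            rw [Prod.ext_iff] at this
            exact ⟨this.1.symm, this.2.symm⟩
          · rintro ⟨h1, h2⟩
            exact Subtype.ext (Prod.ext h1.symm h2.symm)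
        have he2 : ((⟨(a, b), hposne⟩ : P) = (⟨(i, L), hposiL⟩ : P)) ↔ (i = a ∧ L = b) := by
          constructor
          · intro hcon
            have := congrArg Subtype.val hcon
            rw [Prod.ext_iff] at this
            exact ⟨this.1.symm, this.2.symm⟩
          · rintro ⟨h1, h2⟩
            exact Subtype.ext (Prod.ext h1.symm h2.symm)
        have he3 : ((⟨(a, b), hposne⟩ : P) = (⟨(L, i), hposLi⟩ : P)) ↔ (L = a ∧ i = b) := by
          constructor
          · intro hcon
            have := congrArg Subtype.val hcon
            rw [Prod.ext_iff] at this
            exact ⟨this.1.symm, this.2.symm⟩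
          · rintro ⟨h1, h2⟩
            exact Subtype.ext (Prod.ext h1.symm h2.symm)
        simp only [he1, he2, he3]
        split_ifs <;> push_cast <;> ring
      have : Pi.single (⟨(i, i), hne⟩ : P) (1 : ZMod q)
          = (fun pos : P => ((bmat l (dg l i L hiL) pos.1.1 pos.1.2 : ℤ) : ZMod q))
            + Pi.single (⟨(i, L), hposiL⟩ : P) (1 : ZMod q)
            - Pi.single (⟨(L, i), hposLi⟩ : P) (1 : ZMod q) := by
        rw [hval]; abel
      rw [this]
      exact sub_mem (add_mem hdgW (hoffW i L hiL hposiL)) (hoffW L i (Ne.symm hiL) hposLi)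
    · exact hoffW i j hij hne
  have hallW : ∀ v : P → ZMod q, v ∈ W := by
    intro v
    have hv : v = ∑ pos : P, Pi.single pos (v pos) := by
      rw [Finset.univ_sum_single]
    rw [hv]
    apply AddSubgroup.sum_mem
    intro pos _
    have hnat : ∀ k : ℕ, Pi.single pos ((k : ℕ) : ZMod q) ∈ W := by
      intro k
      induction k with
      | zero => simpa using AddSubgroup.zero_mem W
      | succ k ih =>
        have hstep : (Pi.single pos (((k + 1 : ℕ) : ℕ) : ZMod q) : P → ZMod q)
            = (Pi.single pos ((k : ℕ) : ZMod q) : P → ZMod q)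
              + (Pi.single pos (1 : ZMod q) : P → ZMod q) := by
          rw [← Pi.single_add]
          congr 1
          push_cast
          ring
        rw [hstep]
        exact add_mem ih (hsingleW pos)
    have hvv : (Pi.single pos (v pos) : P → ZMod q)
        = (Pi.single pos (((v pos).val : ℕ) : ZMod q) : P → ZMod q) := by
      rw [ZMod.natCast_val, ZMod.cast_id]
    rw [hvv]
    exact hnat _
  have hsurj : Function.Surjective g := by
    intro x
    have := (hWmem (Multiplicative.toAdd x)).mp (hallW _)
    obtain ⟨A, hA⟩ := this
    exact ⟨A, by simpa using hA⟩
  -- assemble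
  have e1 : (↥(Gamma l n) ⧸ g.ker) ≃* Multiplicative (P → ZMod q) :=
    QuotientGroup.quotientKerEquivOfSurjective g hsurj
  have e1' : (↥(Gamma l n) ⧸ (Gamma m n).subgroupOf (Gamma l n)) ≃* Multiplicative (P → ZMod q) :=
    (QuotientGroup.quotientMulEquivOfEq hker.symm).trans e1
  -- index equivalence
  have hcard : Fintype.card P = n ^ 2 - 1 := by
    have h2 := Fintype.card_subtype_compl (fun pos : Fin n × Fin n => pos = (L, L))
    rw [Fintype.card_subtype_eq] at h2
    have h3 : Fintype.card P = Fintype.card {pos : Fin n × Fin n // ¬(pos = (L, L))} :=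
      Fintype.card_congr (Equiv.subtypeEquivRight (fun _ => Iff.rfl))
    rw [h3, h2]
    simp [pow_two]
  obtain ⟨eidx⟩ : Nonempty (P ≃ Fin (n ^ 2 - 1)) := by
    refine ⟨Fintype.equivOfCardEq ?_⟩
    simp [hcard]
  let e2 : (P → ZMod q) ≃+ (Fin (n ^ 2 - 1) → ZMod q) :=
    { toFun := fun f k => f (eidx.symm k)
      invFun := fun f p => f (eidx p)
      left_inv := fun f => by funext p; simp
      right_inv := fun f => by funext k; simp
      map_add' := fun f h => rfl }
  exact ⟨e1'.trans e2.toMultiplicative⟩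
end

section
/- Let l ≥ 1, m ≥ 1 and n ≥ 3 be integers with gcd(l,m) = 1. Then the quotient group Γ_l(n) / Γ_{lm}(n) is isomorphic to SL(n, ℤ/mℤ). -/
open Matrix

open Finset in
/-- Stable range 1 for ℤ/N: a unimodular-mod-N tuple can be shortened. -/
lemma stable_range {k N : ℕ} (hN : 0 < N) (a : Fin (k+1) → ℤ)
    (h : ∀ p : ℕ, p.Prime → p ∣ N → ∃ i, ¬ (p:ℤ) ∣ a i) :
    ∃ t : Fin k → ℤ, IsCoprime (a 0 + ∑ i, t i * a i.succ) ((N:ℤ)) := by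
  classical
  have J : ∀ p : ℕ, p.Prime → p ∣ N →
      {i : Fin (k+1) // ¬ (p:ℤ) ∣ a i ∧ (i = 0 ↔ ¬ (p:ℤ) ∣ a 0)} := by
    intro p hp hpN
    by_cases h0 : (p:ℤ) ∣ a 0
    · have hex := h p hp hpN
      refine ⟨hex.choose, hex.choose_spec, ?_, fun hn => absurd h0 hn⟩
      intro he; exact absurd h0 (he ▸ hex.choose_spec)
    · exact ⟨0, h0, fun _ => h0, fun _ => rfl⟩
  set j : ℕ → Fin (k+1) := fun p =>
    if hp : p.Prime ∧ p ∣ N then (J p hp.1 hp.2).1 else 0 with hj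
  set t : Fin k → ℤ := fun i =>
    ∏ p ∈ N.primeFactors.filter (fun p : ℕ => ¬ (p:ℤ) ∣ a i.succ ∧ j p ≠ i.succ), (p:ℤ) with ht
  refine ⟨t, ?_⟩
  set w : ℤ := a 0 + ∑ i, t i * a i.succ with hw
  rw [Int.isCoprime_iff_gcd_eq_one]
  by_contra hg
  obtain ⟨q, hq, hqg⟩ := Nat.exists_prime_and_dvd hg
  have hqN : q ∣ N := Int.natCast_dvd_natCast.mp
    ((Int.natCast_dvd_natCast.mpr hqg).trans (Int.gcd_dvd_right _ _))
  have hqw : (q:ℤ) ∣ w := (Int.natCast_dvd_natCast.mpr hqg).trans (Int.gcd_dvd_left _ _)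
  have hqmem : q ∈ N.primeFactors := Nat.mem_primeFactors.mpr ⟨hq, hqN, hN.ne'⟩
  have hjq : j q = (J q hq hqN).1 := by rw [hj]; simp [hq, hqN]
  have hterm : ∀ i : Fin k, j q ≠ i.succ → (q:ℤ) ∣ t i * a i.succ := by
    intro i hne
    by_cases hdvd : (q:ℤ) ∣ a i.succ
    · exact Dvd.dvd.mul_left hdvd _
    · exact Dvd.dvd.mul_right
        (Finset.dvd_prod_of_mem _ (Finset.mem_filter.mpr ⟨hqmem, hdvd, hne⟩)) _
  by_cases h0 : (q:ℤ) ∣ a 0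
  · -- j q ≠ 0, say j q = i₀.succ
    have hne0 : j q ≠ 0 := by
      rw [hjq]; intro hcon; exact ((J q hq hqN).2.2.mp hcon) h0
    obtain ⟨i₀, hi₀⟩ := Fin.exists_succ_eq.mpr hne0
    have hrest : (q:ℤ) ∣ ∑ i ∈ Finset.univ.erase i₀, t i * a i.succ := by
      refine Finset.dvd_sum fun i hi => hterm i ?_
      rw [← hi₀]
      intro hcon
      exact (Finset.mem_erase.mp hi).1 (Fin.succ_injective _ hcon).symm
    have hsum : (q:ℤ) ∣ t i₀ * a i₀.succ := by
      have h1 : t i₀ * a i₀.succ + ∑ i ∈ Finset.univ.erase i₀, t i * a i.succ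
          = ∑ i, t i * a i.succ 
        := Finset.add_sum_erase _ (fun i => t i * a i.succ) (Finset.mem_univ i₀)
      have h2 : t i₀ * a i₀.succ
          = w - a 0 - ∑ i ∈ Finset.univ.erase i₀, t i * a i.succ := by
        rw [hw, ← h1]; ring
      rw [h2]
      exact dvd_sub (dvd_sub hqw h0) hrest
    have hqprime : Prime (q:ℤ) := Nat.prime_iff_prime_int.mp hq
    rcases hqprime.dvd_mul.mp hsum with hd | hd
    · rw [ht] at hd
      obtain ⟨p, hp, hpd⟩ := (hqprime.dvd_finset_prod_iff _).mp hd
      obtain ⟨hpmem, hpd1, hpd2⟩ := Finset.mem_filter.mp hp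
      have hqp : q = p := (Nat.prime_dvd_prime_iff_eq hq
        (Nat.prime_of_mem_primeFactors hpmem)).mp (Int.natCast_dvd_natCast.mp hpd)
      rw [← hqp, hi₀] at hpd2
      exact hpd2 rfl
    · rw [hi₀, hjq] at hd
      exact (J q hq hqN).2.1 hd
  · -- j q = 0; all the sum terms are divisible by q, so q ∣ a 0, contradiction
    have hjq0 : j q = 0 := by rw [hjq]; exact (J q hq hqN).2.2.mpr h0
    have hall : (q:ℤ) ∣ ∑ i, t i * a i.succ :=
      Finset.dvd_sum fun i _ => hterm i (by rw [hjq0]; exact (Fin.succ_ne_zero i).symm)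
    have : (q:ℤ) ∣ a 0 := by
      have : a 0 = w - ∑ i, t i * a i.succ := by rw [hw]; ring
      rw [this]; exact dvd_sub hqw hall
    exact h0 this


section Elem
variable {α β : Type*} [CommRing α] [CommRing β] {r : ℕ}

/-- Row-elementary matrix: identity plus an extra first row `c`. -/
def Eu (c : Fin (r+1) → α) : Matrix (Fin (r+1)) (Fin (r+1)) α :=
  1 + Matrix.of (fun i j => if i = 0 then c j else 0)

/-- Column-elementary matrix: identity plus an extra first column `c`. -/
def El (c : Fin (r+1) → α) : Matrix (Fin (r+1)) (Fin (r+1)) α :=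
  1 + Matrix.of (fun i j => if j = 0 then c i else 0)

theorem det_Eu (c : Fin (r+1) → α) (hc : c 0 = 0) : (Eu c).det = 1 := by
  have h : (Eu c).BlockTriangular id := by
    intro i j hij
    have hi0 : i ≠ 0 := by
      intro h; subst h; exact Fin.not_lt_zero _ hij
    have hij' : ¬ i = j := (ne_of_gt hij)
    simp [Eu, Matrix.one_apply, hi0, hij']
  rw [Matrix.det_of_upperTriangular h]
  refine Finset.prod_eq_one fun i _ => ?_
  by_cases hi : i = 0
  · subst hi; simp [Eu, Matrix.one_apply, hc]
  · simp [Eu, Matrix.one_apply, hi]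

theorem El_transpose (c : Fin (r+1) → α) : (El c)ᵀ = Eu c := by
  ext i j
  simp [El, Eu, Matrix.one_apply, eq_comm]

theorem det_El (c : Fin (r+1) → α) (hc : c 0 = 0) : (El c).det = 1 := by
  rw [← Matrix.det_transpose, El_transpose]; exact det_Eu c hc

theorem Eu_map (f : α →+* β) (c : Fin (r+1) → α) : (Eu c).map f = Eu (f ∘ c) := by
  ext i j
  simp [Eu, Matrix.map_apply, Matrix.one_apply, apply_ite f]

theorem El_map (f : α →+* β) (c : Fin (r+1) → α) : (El c).map f = El (f ∘ c) := by
  ext i j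
  simp [El, Matrix.map_apply, Matrix.one_apply, apply_ite f]

theorem Eu_mul_apply (c : Fin (r+1) → α) (M : Matrix (Fin (r+1)) (Fin (r+1)) α) (i j) :
    (Eu c * M) i j = M i j + if i = 0 then ∑ k, c k * M k j else 0 := by
  have h : Eu c * M = M + Matrix.of (fun i j => if i = 0 then c j else 0) * M := by
    rw [Eu, add_mul, one_mul]
  rw [h, Matrix.add_apply, Matrix.mul_apply]
  congr 1
  by_cases hi : i = 0 <;> simp [hi]

theorem El_mul_apply (c : Fin (r+1) → α) (M : Matrix (Fin (r+1)) (Fin (r+1)) α) (i j) :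
    (El c * M) i j = M i j + c i * M 0 j := by
  have h : El c * M = M + Matrix.of (fun i j => if j = 0 then c i else 0) * M := by
    rw [El, add_mul, one_mul]
  rw [h, Matrix.add_apply, Matrix.mul_apply]
  congr 1
  rw [Finset.sum_eq_single 0] <;> simp +contextual

theorem mul_Eu_apply (c : Fin (r+1) → α) (M : Matrix (Fin (r+1)) (Fin (r+1)) α) (i j) :
    (M * Eu c) i j = M i j + M i 0 * c j := by
  have h : M * Eu c = M + M * Matrix.of (fun i j => if i = 0 then c j else 0) := by
    rw [Eu, mul_add, mul_one]
  rw [h, Matrix.add_apply, Matrix.mul_apply]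
  congr 1
  rw [Finset.sum_eq_single 0] <;> simp +contextual

end Elem


section Embed
variable {α β : Type*} [CommRing α] [CommRing β] {r : ℕ}

/-- Embed an `r × r` matrix into the lower-right corner of an `(r+1) × (r+1)` matrix,
with a `1` in the upper-left corner. -/
def embedM (B : Matrix (Fin r) (Fin r) α) : Matrix (Fin (r+1)) (Fin (r+1)) α :=
  Matrix.of (Fin.cons (Fin.cons 1 0) (fun i => Fin.cons 0 (B i)))

@[simp] theorem embedM_zero_zero (B : Matrix (Fin r) (Fin r) α) : embedM B 0 0 = 1 := rfl

@[simp] theorem embedM_zero_succ (B : Matrix (Fin r) (Fin r) α) (j : Fin r) :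
    embedM B 0 j.succ = 0 := by simp [embedM]

@[simp] theorem embedM_succ_zero (B : Matrix (Fin r) (Fin r) α) (i : Fin r) :
    embedM B i.succ 0 = 0 := by simp [embedM]

@[simp] theorem embedM_succ_succ (B : Matrix (Fin r) (Fin r) α) (i j : Fin r) :
    embedM B i.succ j.succ = B i j := by simp [embedM]

theorem det_eq_submatrix (M : Matrix (Fin (r+1)) (Fin (r+1)) α) (h00 : M 0 0 = 1)
    (h0 : ∀ j : Fin r, M 0 j.succ = 0) :
    M.det = (M.submatrix Fin.succ Fin.succ).det := by
  rw [Matrix.det_succ_row_zero]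
  rw [Fintype.sum_eq_single 0]
  · rw [h00, ← Fin.succAbove_zero]
    simp
  · intro j hj
    obtain ⟨j', rfl⟩ := Fin.exists_succ_eq.mpr hj
    rw [h0 j']
    ring

theorem det_embedM (B : Matrix (Fin r) (Fin r) α) : (embedM B).det = B.det := by
  rw [det_eq_submatrix _ (embedM_zero_zero B) (embedM_zero_succ B)]
  have h : (embedM B).submatrix Fin.succ Fin.succ = B := by
    ext i j
    rw [Matrix.submatrix_apply, embedM_succ_succ]
  rw [h]

theorem eq_embedM (M : Matrix (Fin (r+1)) (Fin (r+1)) α) (h00 : M 0 0 = 1)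
    (h0 : ∀ j : Fin r, M 0 j.succ = 0) (h1 : ∀ i : Fin r, M i.succ 0 = 0) :
    M = embedM (M.submatrix Fin.succ Fin.succ) := by
  ext i j
  refine Fin.cases ?_ (fun i' => ?_) i <;> refine Fin.cases ?_ (fun j' => ?_) j <;> simp [h00, h0, h1]

theorem embedM_map (f : α →+* β) (B : Matrix (Fin r) (Fin r) α) :
    (embedM B).map f = embedM (B.map f) := by
  ext i j
  refine Fin.cases ?_ (fun i' => ?_) i <;> refine Fin.cases ?_ (fun j' => ?_) j <;> simp

end Embed

section Mem
variable {N r : ℕ}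

theorem Eu_mem (c : Fin (r+1) → ZMod N) (hc : c 0 = 0) :
    (⟨Eu c, det_Eu c hc⟩ : Matrix.SpecialLinearGroup (Fin (r+1)) (ZMod N)) ∈
      (Matrix.SpecialLinearGroup.map (Int.castRingHom (ZMod N))).range := by
  classical
  set ct : Fin (r+1) → ℤ := fun i =>
    if i = 0 then 0 else (ZMod.intCast_surjective (c i)).choose with hct
  have hcast : (Int.castRingHom (ZMod N)) ∘ ct = c := by
    funext i
    by_cases hi : i = 0
    · subst hi; simp [hct, hc]
    · simpa [hct, hi] using (ZMod.intCast_surjective (c i)).choose_spec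
  refine ⟨⟨Eu ct, det_Eu ct (by simp [hct])⟩, Subtype.ext ?_⟩
  erw [Matrix.SpecialLinearGroup.map_apply_coe, RingHom.mapMatrix_apply]
  show (Eu ct).map _ = Eu c
  rw [Eu_map, hcast]

theorem El_mem (c : Fin (r+1) → ZMod N) (hc : c 0 = 0) :
    (⟨El c, det_El c hc⟩ : Matrix.SpecialLinearGroup (Fin (r+1)) (ZMod N)) ∈
      (Matrix.SpecialLinearGroup.map (Int.castRingHom (ZMod N))).range := by
  classical
  set ct : Fin (r+1) → ℤ := fun i =>
    if i = 0 then 0 else (ZMod.intCast_surjective (c i)).choose with hct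
  have hcast : (Int.castRingHom (ZMod N)) ∘ ct = c := by
    funext i
    by_cases hi : i = 0
    · subst hi; simp [hct, hc]
    · simpa [hct, hi] using (ZMod.intCast_surjective (c i)).choose_spec
  refine ⟨⟨El ct, det_El ct (by simp [hct])⟩, Subtype.ext ?_⟩
  erw [Matrix.SpecialLinearGroup.map_apply_coe, RingHom.mapMatrix_apply]
  show (El ct).map _ = El c
  rw [El_map, hcast]

end Mem

theorem SL_lift (N : ℕ) (hN : 0 < N) (r : ℕ) :
    Function.Surjective
      (Matrix.SpecialLinearGroup.map (n := Fin r) (Int.castRingHom (ZMod N))) := by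
  classical
  have : NeZero N := ⟨hN.ne'⟩
  induction r with
  | zero =>
    intro X
    refine ⟨1, Subtype.ext ?_⟩
    ext i j
    exact Fin.elim0 i
  | succ r IH =>
    match r, IH with
    | 0, _ =>
      intro X
      refine ⟨1, Subtype.ext ?_⟩
      have : (X : Matrix (Fin 1) (Fin 1) (ZMod N)) = 1 := by
        ext i j
        fin_cases i; fin_cases j
        have := X.prop
        rw [Matrix.det_fin_one] at this
        simpa using this
      rw [this]
      simp
    | r+1, IH =>
      intro X
      set M : Matrix (Fin (r+2)) (Fin (r+2)) (ZMod N) := X.1 with hM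
      -- integer lifts of the first column
      set a : Fin (r+2) → ℤ := fun i => ((M i 0).val : ℤ) with ha
      have hcast : ∀ i, ((a i : ℤ) : ZMod N) = M i 0 := by
        intro i
        simp [ha, ZMod.natCast_val, ZMod.cast_id]
      -- the first column is unimodular mod every prime dividing N
      have hprime : ∀ p : ℕ, p.Prime → p ∣ N → ∃ i, ¬ (p:ℤ) ∣ a i := by
        intro p hp hpN
        by_contra hall
        push_neg at hall
        have hfact : Fact p.Prime := ⟨hp⟩
        have hsum : ∑ j, M.adjugate 0 j * M j 0 = 1 := by
          have h1 := Matrix.adjugate_mul M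
          have h2 := congrArg (fun Q => Q 0 0) h1
          simp only [Matrix.mul_apply, Matrix.smul_apply, Matrix.one_apply_eq,
            smul_eq_mul, mul_one] at h2
          rw [h2]
          have : M.det = 1 := X.prop
          rw [this]
        have h3 := congrArg (ZMod.castHom hpN (ZMod p)) hsum
        rw [map_sum, _root_.map_one] at h3
        have h4 : ∀ j, (ZMod.castHom hpN (ZMod p)) (M.adjugate 0 j * M j 0) = 0 := by
          intro j
          rw [_root_.map_mul]
          have : (ZMod.castHom hpN (ZMod p)) (M j 0) = 0 := by
            rw [← hcast j, map_intCast]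
            exact (ZMod.intCast_zmod_eq_zero_iff_dvd _ _).mpr (hall j)
          rw [this, mul_zero]
        rw [Finset.sum_eq_zero (fun j _ => h4 j)] at h3
        exact one_ne_zero h3.symm
      obtain ⟨t, hw⟩ := stable_range hN a hprime
      obtain ⟨s, s', hss⟩ := hw
      set w : ℤ := a 0 + ∑ i, t i * a i.succ with hwdef
      -- step 1 : make the (0,0) entry a unit
      set c₁ : Fin (r+2) → ZMod N := Fin.cons 0 (fun i => ((t i : ℤ) : ZMod N)) with hc₁
      have hc₁0 : c₁ 0 = 0 := rfl
      set M₁ : Matrix (Fin (r+2)) (Fin (r+2)) (ZMod N) := Eu c₁ * M with hM₁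
      have hu : M₁ 0 0 = ((w : ℤ) : ZMod N) := by
        rw [hM₁, Eu_mul_apply, if_pos rfl, Fin.sum_univ_succ, hwdef]
        push_cast
        simp only [hc₁, Fin.cons_zero, Fin.cons_succ, zero_mul, zero_add]
        rw [hcast 0]
        congr 1
        refine Finset.sum_congr rfl fun i _ => ?_
        rw [hcast i.succ]
      have hsu : ((s : ℤ) : ZMod N) * M₁ 0 0 = 1 := by
        rw [hu]
        have := congrArg (fun z : ℤ => ((z : ℤ) : ZMod N)) hss
        push_cast at this
        simpa [ZMod.natCast_self] using this
      -- step 2 : make the (1,0) entry equal to 1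
      set c₂ : Fin (r+2) → ZMod N :=
        fun i => if i = 1 then (1 - M₁ 1 0) * ((s : ℤ) : ZMod N) else 0 with hc₂
      have hc₂0 : c₂ 0 = 0 := by simp [hc₂]
      set M₂ : Matrix (Fin (r+2)) (Fin (r+2)) (ZMod N) := El c₂ * M₁ with hM₂
      have h₂10 : M₂ 1 0 = 1 := by
        rw [hM₂, El_mul_apply]
        simp only [hc₂, if_pos rfl]
        rw [mul_assoc, hsu]
        ring
      have h₂00 : M₂ 0 0 = M₁ 0 0 := by
        rw [hM₂, El_mul_apply, hc₂0]
        ring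
      -- step 3 : make the (0,0) entry equal to 1
      set c₃ : Fin (r+2) → ZMod N := fun j => if j = 1 then 1 - M₂ 0 0 else 0 with hc₃
      have hc₃0 : c₃ 0 = 0 := by simp [hc₃]
      set M₃ : Matrix (Fin (r+2)) (Fin (r+2)) (ZMod N) := Eu c₃ * M₂ with hM₃
      have h₃00 : M₃ 0 0 = 1 := by
        rw [hM₃, Eu_mul_apply, if_pos rfl]
        have : ∑ k, c₃ k * M₂ k 0 = (1 - M₂ 0 0) * M₂ 1 0 := by
          rw [Finset.sum_eq_single 1]
          · simp [hc₃]
          · intro b _ hb; simp [hc₃, hb]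
          · intro hb; exact absurd (Finset.mem_univ _) hb
        rw [this, h₂10]
        ring
      have h₃row : ∀ i, i ≠ 0 → ∀ j, M₃ i j = M₂ i j := by
        intro i hi j
        rw [hM₃, Eu_mul_apply, if_neg hi]
        ring
      -- step 4 : clear the rest of column 0
      set c₄ : Fin (r+2) → ZMod N := fun i => if i = 0 then 0 else - M₃ i 0 with hc₄
      have hc₄0 : c₄ 0 = 0 := by simp [hc₄]
      set M₄ : Matrix (Fin (r+2)) (Fin (r+2)) (ZMod N) := El c₄ * M₃ with hM₄
      have h₄00 : M₄ 0 0 = 1 := by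
        rw [hM₄, El_mul_apply, hc₄0, h₃00]
        ring
      have h₄i0 : ∀ i : Fin (r+1), M₄ i.succ 0 = 0 := by
        intro i
        rw [hM₄, El_mul_apply]
        simp only [hc₄, if_neg (Fin.succ_ne_zero i)]
        rw [h₃00]
        ring
      have h₄0j : ∀ j, M₄ 0 j = M₃ 0 j := by
        intro j
        rw [hM₄, El_mul_apply, hc₄0]
        ring
      -- step 5 : clear the rest of row 0
      set c₅ : Fin (r+2) → ZMod N := fun j => if j = 0 then 0 else - M₄ 0 j with hc₅
      have hc₅0 : c₅ 0 = 0 := by simp [hc₅]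
      set M₅ : Matrix (Fin (r+2)) (Fin (r+2)) (ZMod N) := M₄ * Eu c₅ with hM₅
      have h₅00 : M₅ 0 0 = 1 := by
        rw [hM₅, mul_Eu_apply, hc₅0, h₄00]
        ring
      have h₅0j : ∀ j : Fin (r+1), M₅ 0 j.succ = 0 := by
        intro j
        rw [hM₅, mul_Eu_apply, h₄00]
        simp only [hc₅, if_neg (Fin.succ_ne_zero j)]
        ring
      have h₅i0 : ∀ i : Fin (r+1), M₅ i.succ 0 = 0 := by
        intro i
        rw [hM₅, mul_Eu_apply, hc₅0, h₄i0]
        ring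
      -- package the elementary matrices as SL elements
      set g₁ : Matrix.SpecialLinearGroup (Fin (r+2)) (ZMod N) := ⟨Eu c₁, det_Eu c₁ hc₁0⟩
      set g₂ : Matrix.SpecialLinearGroup (Fin (r+2)) (ZMod N) := ⟨El c₂, det_El c₂ hc₂0⟩
      set g₃ : Matrix.SpecialLinearGroup (Fin (r+2)) (ZMod N) := ⟨Eu c₃, det_Eu c₃ hc₃0⟩
      set g₄ : Matrix.SpecialLinearGroup (Fin (r+2)) (ZMod N) := ⟨El c₄, det_El c₄ hc₄0⟩
      set g₅ : Matrix.SpecialLinearGroup (Fin (r+2)) (ZMod N) := ⟨Eu c₅, det_Eu c₅ hc₅0⟩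
      set X₅ : Matrix.SpecialLinearGroup (Fin (r+2)) (ZMod N) :=
        g₄ * (g₃ * (g₂ * (g₁ * X))) * g₅ with hX₅
      have hX₅val : X₅.1 = M₅ := by
        rw [hX₅, hM₅, hM₄, hM₃, hM₂, hM₁, hM]
        rfl
      -- X₅ is a block matrix; lift its lower-right block by induction
      set Y : Matrix (Fin (r+1)) (Fin (r+1)) (ZMod N) := M₅.submatrix Fin.succ Fin.succ with hY
      have hdetY : Y.det = 1 := by
        rw [hY, ← det_eq_submatrix M₅ h₅00 h₅0j, ← hX₅val]
        exact X₅.prop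
      obtain ⟨B, hB⟩ := IH ⟨Y, hdetY⟩
      set H := (Matrix.SpecialLinearGroup.map
        (n := Fin (r+2)) (Int.castRingHom (ZMod N))).range with hH
      have hmem5 : X₅ ∈ H := by
        refine ⟨⟨embedM B.1, by rw [det_embedM]; exact B.prop⟩, Subtype.ext ?_⟩
        erw [Matrix.SpecialLinearGroup.map_apply_coe, RingHom.mapMatrix_apply]
        show (embedM B.1).map _ = _
        rw [embedM_map]
        have hBval : B.1.map (Int.castRingHom (ZMod N)) = Y := by
          have h := congrArg Subtype.val hB
          simpa [Matrix.SpecialLinearGroup.map_apply_coe, RingHom.mapMatrix_apply] using h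
        rw [hBval, hX₅val]
        exact (eq_embedM M₅ h₅00 h₅0j h₅i0).symm
      have hg₁ : g₁ ∈ H := Eu_mem c₁ hc₁0
      have hg₂ : g₂ ∈ H := El_mem c₂ hc₂0
      have hg₃ : g₃ ∈ H := Eu_mem c₃ hc₃0
      have hg₄ : g₄ ∈ H := El_mem c₄ hc₄0
      have hg₅ : g₅ ∈ H := Eu_mem c₅ hc₅0
      have hXmem : X ∈ H := by
        have hXeq : X = g₁⁻¹ * (g₂⁻¹ * (g₃⁻¹ * (g₄⁻¹ * (X₅ * g₅⁻¹)))) := by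
          rw [hX₅]
          group
        rw [hXeq]
        exact Subgroup.mul_mem _ (Subgroup.inv_mem _ hg₁)
          (Subgroup.mul_mem _ (Subgroup.inv_mem _ hg₂)
            (Subgroup.mul_mem _ (Subgroup.inv_mem _ hg₃)
              (Subgroup.mul_mem _ (Subgroup.inv_mem _ hg₄)
                (Subgroup.mul_mem _ hmem5 (Subgroup.inv_mem _ hg₅)))))
      exact hXmem

theorem zmod_int_cast_eq_iff (d : ℕ) (x y : ℤ) :
    ((x : ZMod d) = (y : ZMod d)) ↔ (d:ℤ) ∣ x - y := by
  rw [← sub_eq_zero, ← Int.cast_sub, ZMod.intCast_zmod_eq_zero_iff_dvd]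

theorem one_entry_cast (d n : ℕ) (i j : Fin n) :
    (((1 : Matrix (Fin n) (Fin n) ℤ) i j : ℤ) : ZMod d) = (1 : Matrix (Fin n) (Fin n) (ZMod d)) i j := by
  by_cases hij : i = j <;> simp [Matrix.one_apply, hij]


theorem mem_Gamma_iff {d n : ℕ} (A : SLZ n) :
    A ∈ Gamma d n ↔ ∀ i j, (d:ℤ) ∣ (A.1 i j - (1 : Matrix (Fin n) (Fin n) ℤ) i j) := by
  rw [Gamma, MonoidHom.mem_ker]
  erw [Subtype.ext_iff]
  erw [Matrix.SpecialLinearGroup.map_apply_coe, RingHom.mapMatrix_apply]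
  erw [Matrix.SpecialLinearGroup.coe_one]
  rw [← Matrix.ext_iff]
  have key : ∀ i j, ((A.1.map (Int.castRingHom (ZMod d)) i j = (1 : Matrix (Fin n) (Fin n) (ZMod d)) i j)
      ↔ (d:ℤ) ∣ (A.1 i j - (1 : Matrix (Fin n) (Fin n) ℤ) i j)) := by
    intro i j
    rw [Matrix.map_apply, ← one_entry_cast d n i j]
    exact zmod_int_cast_eq_iff d _ _
  constructor
  · intro h i j; exact (key i j).mp (h i j)
  · intro h i j; exact (key i j).mpr (h i j)

/-- Example 6.2(1): for `l, m ≥ 1`, `n ≥ 3` with `gcd(l, m) = 1`,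
`Γ_l(n)/Γ_{lm}(n) ≅ SL(n, ℤ/mℤ)`. -/
theorem gamma_quotient_iso_sl (l m n : ℕ) (hl : 1 ≤ l) (hm : 1 ≤ m) (hn : 3 ≤ n)
    (hcop : Nat.gcd l m = 1) :
    Nonempty
      ((Gamma l n ⧸ (Gamma (l * m) n).subgroupOf (Gamma l n)) ≃*
        Matrix.SpecialLinearGroup (Fin n) (ZMod m)) := by
  classical
  have hmne : NeZero m := ⟨by omega⟩
  have hcopZ : IsCoprime (l:ℤ) (m:ℤ) := Nat.isCoprime_iff_coprime.mpr hcop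
  set φ : Gamma l n →* Matrix.SpecialLinearGroup (Fin n) (ZMod m) :=
    (Matrix.SpecialLinearGroup.map (Int.castRingHom (ZMod m))).comp
      (Gamma l n).subtype with hφ
  have hker : φ.ker = (Gamma (l * m) n).subgroupOf (Gamma l n) := by
    ext x
    rw [MonoidHom.mem_ker, Subgroup.mem_subgroupOf]
    have hx : x.1 ∈ Gamma l n := x.2
    rw [hφ, MonoidHom.comp_apply]
    have h1 : ((Matrix.SpecialLinearGroup.map
        (Int.castRingHom (ZMod m))) ((Gamma l n).subtype x) = 1) ↔ x.1 ∈ Gamma m n :=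
      Iff.rfl
    rw [h1, mem_Gamma_iff, mem_Gamma_iff]
    rw [mem_Gamma_iff] at hx
    constructor
    · intro h i j
      push_cast
      exact hcopZ.mul_dvd (hx i j) (h i j)
    · intro h i j
      refine dvd_trans ?_ (h i j)
      exact ⟨l, by push_cast; ring⟩
  have hsurj : Function.Surjective φ := by
    intro Y
    obtain ⟨u, v, huv⟩ := id hcopZ
    set C : Matrix (Fin n) (Fin n) ℤ :=
      (v * (m:ℤ)) • (1 : Matrix (Fin n) (Fin n) ℤ) +
        (u * (l:ℤ)) • Matrix.of (fun i j => ((Y.1 i j).val : ℤ)) with hC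
    have hCval : ∀ i j, C i j =
        v * m * ((1 : Matrix (Fin n) (Fin n) ℤ) i j) + u * l * ((Y.1 i j).val : ℤ) := by
      intro i j
      rw [hC]
      simp only [Matrix.add_apply, Matrix.smul_apply, Matrix.of_apply, smul_eq_mul]
    -- C is 1 mod l
    have hCl : ∀ i j, (l:ℤ) ∣ (C i j - (1 : Matrix (Fin n) (Fin n) ℤ) i j) := by
      intro i j
      rw [hCval i j]
      have : v * ↑m * (1 : Matrix (Fin n) (Fin n) ℤ) i j + u * ↑l * ↑(Y.1 i j).val
          - (1 : Matrix (Fin n) (Fin n) ℤ) i j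
          = (v * ↑m - 1) * ((1 : Matrix (Fin n) (Fin n) ℤ) i j) + u * ((Y.1 i j).val : ℤ) * ↑l := by
        ring
      rw [this]
      refine dvd_add (Dvd.dvd.mul_right ?_ _) (Dvd.dvd.mul_left dvd_rfl _)
      exact ⟨-u, by linarith [huv]⟩
    -- C is Y mod m
    have hCm : ∀ i j, (m:ℤ) ∣ (C i j - ((Y.1 i j).val : ℤ)) := by
      intro i j
      rw [hCval i j]
      have : v * ↑m * (1 : Matrix (Fin n) (Fin n) ℤ) i j + u * ↑l * ↑(Y.1 i j).val
          - ((Y.1 i j).val : ℤ)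
          = v * ((1 : Matrix (Fin n) (Fin n) ℤ) i j) * ↑m + (u * ↑l - 1) * ((Y.1 i j).val : ℤ) := by
        ring
      rw [this]
      refine dvd_add (Dvd.dvd.mul_left dvd_rfl _) (Dvd.dvd.mul_right ?_ _)
      exact ⟨-v, by linarith [huv]⟩
    have hYcast : ∀ i j, ((((Y.1 i j).val : ℤ)) : ZMod m) = Y.1 i j := by
      intro i j
      simp [ZMod.natCast_val, ZMod.cast_id]
    -- determinant of C is 1 mod l*m
    have hmapl : C.map (Int.castRingHom (ZMod l)) = 1 := by
      ext i j
      rw [Matrix.map_apply, ← one_entry_cast l n i j]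
      exact (zmod_int_cast_eq_iff l _ _).mpr (hCl i j)
    have hmapm : C.map (Int.castRingHom (ZMod m)) = Y.1 := by
      ext i j
      rw [Matrix.map_apply, ← hYcast i j]
      exact (zmod_int_cast_eq_iff m _ _).mpr (hCm i j)
    have hdl : (l:ℤ) ∣ (C.det - 1) := by
      have h2 : ((C.det : ZMod l)) = ((1:ℤ) : ZMod l) := by
        have h3 := (Int.castRingHom (ZMod l)).map_det C
        rw [RingHom.mapMatrix_apply, hmapl, Matrix.det_one] at h3
        simpa using h3
      simpa using (zmod_int_cast_eq_iff l _ _).mp h2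
    have hdm : (m:ℤ) ∣ (C.det - 1) := by
      have h2 : ((C.det : ZMod m)) = ((1:ℤ) : ZMod m) := by
        have h3 := (Int.castRingHom (ZMod m)).map_det C
        rw [RingHom.mapMatrix_apply, hmapm] at h3
        rw [Y.prop] at h3
        simpa using h3
      simpa using (zmod_int_cast_eq_iff m _ _).mp h2
    have hdlm : (((l*m : ℕ)):ℤ) ∣ (C.det - 1) := by
      push_cast
      exact hcopZ.mul_dvd hdl hdm
    have hdet : (C.map (Int.castRingHom (ZMod (l*m)))).det = 1 := by
      have h3 := (Int.castRingHom (ZMod (l*m))).map_det C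
      rw [RingHom.mapMatrix_apply] at h3
      rw [← h3]
      have : ((C.det : ZMod (l*m))) = ((1:ℤ) : ZMod (l*m)) :=
        (zmod_int_cast_eq_iff (l*m) _ _).mpr hdlm
      simpa using this
    obtain ⟨B, hB⟩ := SL_lift (l*m) (by positivity) n ⟨C.map (Int.castRingHom (ZMod (l*m))), hdet⟩
    have hBC : ∀ i j, (((l*m : ℕ)):ℤ) ∣ (B.1 i j - C i j) := by
      intro i j
      have h4 := congrArg Subtype.val hB
      rw [Matrix.SpecialLinearGroup.map_apply_coe, RingHom.mapMatrix_apply] at h4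
      have h5 : ((B.1 i j : ℤ) : ZMod (l*m)) = ((C i j : ℤ) : ZMod (l*m)) :=
        congrFun (congrFun h4 i) j
      exact (zmod_int_cast_eq_iff (l*m) _ _).mp h5
    have hBl : B ∈ Gamma l n := by
      rw [mem_Gamma_iff]
      intro i j
      have : B.1 i j - (1 : Matrix (Fin n) (Fin n) ℤ) i j
          = (B.1 i j - C i j) + (C i j - (1 : Matrix (Fin n) (Fin n) ℤ) i j) := by ring
      rw [this]
      refine dvd_add (dvd_trans ⟨m, by push_cast; ring⟩ (hBC i j)) (hCl i j)
    refine ⟨⟨B, hBl⟩, ?_⟩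
    rw [hφ, MonoidHom.comp_apply]
    refine Subtype.ext ?_
    rw [Matrix.SpecialLinearGroup.map_apply_coe, RingHom.mapMatrix_apply]
    show B.1.map _ = Y.1
    ext i j
    rw [Matrix.map_apply, ← hYcast i j]
    refine (zmod_int_cast_eq_iff m _ _).mpr ?_
    have : B.1 i j - ((Y.1 i j).val : ℤ)
        = (B.1 i j - C i j) + (C i j - ((Y.1 i j).val : ℤ)) := by ring
    rw [this]
    exact dvd_add (dvd_trans ⟨l, by push_cast; ring⟩ (hBC i j)) (hCm i j)
  exact ⟨(QuotientGroup.quotientMulEquivOfEq hker.symm).trans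
    (QuotientGroup.quotientKerEquivOfSurjective φ hsurj)⟩
end
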